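/- arXiv:2502.16625 — 7 statements merged into one kernel-verified Lean document; each statement's English description precedes it below -/
import Mathlib

section
/- Let θ be an infinite regular cardinal, (μ_i : i < θ) an increasing sequence of cardinals with μ = sup_{i<θ} μ_i, and suppose ∏_{j<i} μ_j⁺ < μ_i⁺ for every i < θ. Let (f_α : α < μ⁺) be a scale in (∏_{i<θ} μ_i⁺, J^bd_θ): it is <_{J^bd_θ}-increasing and cofinal. For each i < θ, let c_i : [μ_i⁺]² → θ be a coloring such that there is no subset of μ_i⁺ of cardinality μ_i⁺ on which c_i is constantly 0. Then for every A ⊆ μ⁺ of cardinality μ⁺ there exist α < β, both in A, such that c_i({f_α(i), f_β(i)}) ≠ 0, where i is the least j < θ with f_α(j) ≠ f_β(j). -/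
open Cardinal Ordinal Set

private theorem myLiftIsRegular {c : Cardinal.{u}} (h : c.IsRegular) :
    (Cardinal.lift.{v} c).IsRegular := by
  constructor
  · exact Cardinal.aleph0_le_lift.mpr h.1
  · rw [← Cardinal.lift_ord, ← Ordinal.lift_cof, h.cof_eq]

/-- Given an increasing sequence `(μ_i : i < θ)` with supremum `μ` such that
`∏_{j<i} μ_j⁺ < μ_i⁺`, a scale `(f_α : α < μ⁺)` in `(∏_{i<θ} μ_i⁺, J^bd_θ)`, and
colorings `c_i` of pairs below `μ_i⁺` with no `0`-monochromatic set of full size `μ_i⁺`: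
every `A ⊆ μ⁺` of cardinality `μ⁺` contains `α < β` with
`c_i({f_α(i), f_β(i)}) ≠ 0`, where `i` is least with `f_α(i) ≠ f_β(i)`. -/
theorem stmt3 (θ μ : Cardinal.{0}) (hθ : θ.IsRegular)
    (μm : Ordinal.{0} → Cardinal.{0})
    (hmono : ∀ i j : Ordinal, i < j → j < θ.ord → μm i < μm j)
    (hsup : μ = ⨆ i : Set.Iio θ.ord, μm i.val)
    (hprod : ∀ i < θ.ord,
      Cardinal.prod (fun j : Set.Iio i => Order.succ (μm j.val)) <
        Cardinal.lift.{1} (Order.succ (μm i)))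
    (f : Ordinal.{0} → Ordinal.{0} → Ordinal.{0})
    (hf_mem : ∀ α < (Order.succ μ).ord, ∀ i < θ.ord, f α i < (Order.succ (μm i)).ord)
    (hf_inc : ∀ α β : Ordinal, α < β → β < (Order.succ μ).ord →
      ∃ i₀ < θ.ord, ∀ i, i₀ ≤ i → i < θ.ord → f α i < f β i)
    (hf_cof : ∀ g : Ordinal.{0} → Ordinal.{0},
      (∀ i < θ.ord, g i < (Order.succ (μm i)).ord) →
      ∃ α < (Order.succ μ).ord, ∃ i₀ < θ.ord, ∀ i, i₀ ≤ i → i < θ.ord → g i < f α i)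
    (c : Ordinal.{0} → Ordinal.{0} → Ordinal.{0} → Ordinal.{0})
    (hc_sym : ∀ i a b : Ordinal, c i a b = c i b a)
    (hc : ∀ i < θ.ord, ¬ ∃ A : Set Ordinal.{0}, A ⊆ Set.Iio (Order.succ (μm i)).ord ∧
      #A = Cardinal.lift.{1} (Order.succ (μm i)) ∧
      ∀ a ∈ A, ∀ b ∈ A, a < b → c i a b = 0) :
    ∀ A : Set Ordinal.{0}, A ⊆ Set.Iio (Order.succ μ).ord →
      #A = Cardinal.lift.{1} (Order.succ μ) →
      ∃ α ∈ A, ∃ β ∈ A, α < β ∧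
        c (sInf {j | f α j ≠ f β j}) (f α (sInf {j | f α j ≠ f β j}))
          (f β (sInf {j | f α j ≠ f β j})) ≠ 0 := by
  intro A hAsub hAcard
  by_contra hcon
  push_neg at hcon
  -- basic facts
  have hθord : (ω : Ordinal) ≤ θ.ord := by
    calc (ω : Ordinal) = (ℵ₀ : Cardinal).ord := (Cardinal.ord_aleph0).symm
      _ ≤ θ.ord := Cardinal.ord_le_ord.mpr hθ.1
  have hμn : ∀ n : ℕ, (n : Cardinal) ≤ μm (n : Ordinal) := by
    intro n
    induction n with
    | zero => simp
    | succ n ih =>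
        have h1 : ((n : Ordinal)) < ((n + 1 : ℕ) : Ordinal) := by
          exact_mod_cast Nat.lt_succ_self n
        have h2 : (((n + 1 : ℕ)) : Ordinal) < θ.ord :=
          lt_of_lt_of_le (Ordinal.nat_lt_omega0 (n + 1)) hθord
        have hlt : μm (n : Ordinal) < μm ((n + 1 : ℕ) : Ordinal) := hmono _ _ h1 h2
        calc ((n + 1 : ℕ) : Cardinal) = Order.succ (n : Cardinal) := Cardinal.nat_succ n
          _ ≤ μm ((n + 1 : ℕ) : Ordinal) := Order.succ_le_of_lt (lt_of_le_of_lt ih hlt)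
  have hμ : ℵ₀ ≤ μ := by
    rw [Cardinal.aleph0_le]
    intro n
    have h1 : ((n : ℕ) : Ordinal) < θ.ord :=
      lt_of_lt_of_le (Ordinal.nat_lt_omega0 n) hθord
    have h2 : μm ((n : ℕ) : Ordinal) ≤ μ := by
      rw [hsup]
      exact le_ciSup (Cardinal.bddAbove_range _) (⟨(n : Ordinal), h1⟩ : Set.Iio θ.ord)
    exact (hμn n).trans h2
  have hregμ : (Order.succ μ).IsRegular := Cardinal.isRegular_succ hμ
  have hμordlim : Order.IsSuccLimit ((Order.succ μ).ord) := Cardinal.isSuccLimit_ord hregμ.1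
  -- A is unbounded below (succ μ).ord
  have hAunbdd : ∀ b < (Order.succ μ).ord, ∃ α ∈ A, b < α := by
    intro b hb
    by_contra hno
    push_neg at hno
    have hsubset : A ⊆ Set.Iio (b + 1) := by
      intro α hα
      have := hno α hα
      rw [Set.mem_Iio, Ordinal.add_one_eq_succ]; exact Order.lt_succ_iff.mpr this
    have hcard : #A ≤ Cardinal.lift.{1} ((b + 1).card) := by
      calc #A ≤ #(Set.Iio (b + 1)) := Cardinal.mk_le_mk_of_subset hsubset
        _ = Cardinal.lift.{1} ((b + 1).card) := Ordinal.mk_Iio_ordinal _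
    have hb1 : b + 1 < (Order.succ μ).ord := by
      rw [Ordinal.add_one_eq_succ]
      exact hμordlim.succ_lt hb
    have hltc : (b + 1).card < Order.succ μ := Cardinal.lt_ord.mp hb1
    rw [hAcard] at hcard
    exact absurd (Cardinal.lift_le.mp hcard) (not_le.mpr hltc)
  -- the trace sets and the candidate dominating function
  set U : Ordinal → Set Ordinal := fun i => (fun α => f α i) '' A with hU
  set g : Ordinal → Ordinal := fun i => sSup (U i) with hg
  have hUsub : ∀ i < θ.ord, U i ⊆ Set.Iio (Order.succ (μm i)).ord := by
    rintro i hi x ⟨α, hα, rfl⟩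
    exact hf_mem α (hAsub hα) i hi
  have hUbdd : ∀ i < θ.ord, BddAbove (U i) := fun i hi =>
    ⟨(Order.succ (μm i)).ord, fun x hx => (hUsub i hi hx).le⟩
  -- computation of the least point of difference
  have hsInf : ∀ α β : Ordinal, ∀ i : Ordinal, (∀ j : Set.Iio i, f α j.val = f β j.val) →
      f α i ≠ f β i → sInf {j | f α j ≠ f β j} = i := by
    intro α β i hres hne
    apply le_antisymm
    · exact csInf_le (OrderBot.bddBelow _) hne
    · refine le_csInf ⟨i, hne⟩ ?_
      intro j hj
      by_contra hji
      push_neg at hji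
      exact hj (hres ⟨j, hji⟩)
  -- the key bound: g i < (μm i)⁺ for all i < θ.ord
  have hkey : ∀ i < θ.ord, g i < (Order.succ (μm i)).ord := by
    intro i hi
    rcases lt_or_ge (μm i) ℵ₀ with hfin | hinf
    · -- finite levels
      obtain ⟨n, hn⟩ := Cardinal.lt_aleph0.mp hfin
      have hord : (Order.succ (μm i)).ord = Order.succ ((n : Ordinal)) := by
        rw [hn, ← Cardinal.nat_succ, Cardinal.ord_nat, Ordinal.natCast_succ]
      rw [hord]
      refine lt_of_le_of_lt (csSup_le' ?_) (Order.lt_succ (n : Ordinal))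
      intro x hx
      have hxlt := hUsub i hi hx
      rw [hord] at hxlt
      exact Order.lt_succ_iff.mp hxlt
    · -- infinite levels
      have hreg : (Order.succ (μm i)).IsRegular := Cardinal.isRegular_succ hinf
      -- the "restriction classes"
      set D : (Set.Iio i → Ordinal) → Set Ordinal := fun s =>
        {x | ∃ α ∈ A, (∀ j : Set.Iio i, f α j.val = s j) ∧ f α i = x} with hD
      set S : Set (Set.Iio i → Ordinal) :=
        {s | ∃ α ∈ A, ∀ j : Set.Iio i, f α j.val = s j} with hS
      -- each class is 0-homogeneous
      have hDhom : ∀ s, ∀ a ∈ D s, ∀ b ∈ D s, a < b → c i a b = 0 := by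
        rintro s a ⟨α, hα, hαs, rfl⟩ b ⟨β, hβ, hβs, rfl⟩ hab
        have hres : ∀ j : Set.Iio i, f α j.val = f β j.val :=
          fun j => (hαs j).trans (hβs j).symm
        rcases lt_trichotomy α β with h | h | h
        · have h1 := hcon α hα β hβ h
          rwa [hsInf α β i hres (ne_of_lt hab)] at h1
        · subst h
          exact absurd hab (lt_irrefl _)
        · have h1 := hcon β hβ α hα h
          rw [hsInf β α i (fun j => (hres j).symm) (ne_of_gt hab)] at h1
          rw [hc_sym]
          exact h1
      have hDsub : ∀ s, D s ⊆ Set.Iio (Order.succ (μm i)).ord := by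
        rintro s x ⟨α, hα, _, rfl⟩
        exact hf_mem α (hAsub hα) i hi
      have hDcard : ∀ s, #(D s) < Cardinal.lift.{1} (Order.succ (μm i)) := by
        intro s
        have hle : #(D s) ≤ Cardinal.lift.{1} (Order.succ (μm i)) := by
          calc #(D s) ≤ #(Set.Iio (Order.succ (μm i)).ord) :=
                Cardinal.mk_le_mk_of_subset (hDsub s)
            _ = Cardinal.lift.{1} (Order.succ (μm i)) := by
                rw [Ordinal.mk_Iio_ordinal, Cardinal.card_ord]
        rcases hle.lt_or_eq with h | h
        · exact h
        · exact absurd ⟨D s, hDsub s, h, hDhom s⟩ (hc i hi)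
      -- there are few restriction classes
      have hScard : #S < Cardinal.lift.{1} (Order.succ (μm i)) := by
        have hF : Function.Injective
            (fun s : S => (fun j : Set.Iio i =>
              (⟨s.val j, by
                obtain ⟨α, hα, hαs⟩ := s.2
                rw [← hαs j]
                exact hf_mem α (hAsub hα) j.val (lt_trans j.2 hi)⟩ :
                Set.Iio (Order.succ (μm j.val)).ord))) := by
          intro s t h
          apply Subtype.ext
          funext j
          exact congrArg Subtype.val (congrFun h j)
        have h1 : #S ≤ #(∀ j : Set.Iio i, Set.Iio (Order.succ (μm j.val)).ord) :=
          Cardinal.mk_le_of_injective hF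
        have h2 : #(∀ j : Set.Iio i, Set.Iio (Order.succ (μm j.val)).ord) =
            Cardinal.prod (fun j : Set.Iio i => Cardinal.lift.{1} (Order.succ (μm j.val))) := by
          rw [Cardinal.mk_pi]
          congr 1
          funext j
          rw [Ordinal.mk_Iio_ordinal, Cardinal.card_ord]
        have h3 : Cardinal.prod (fun j : Set.Iio i => Cardinal.lift.{1} (Order.succ (μm j.val))) =
            Cardinal.prod (fun j : Set.Iio i => Order.succ (μm j.val)) := by
          rw [← Cardinal.lift_prod, Cardinal.lift_id]
        calc #S ≤ _ := h1
          _ < _ := by rw [h2, h3]; exact hprod i hi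
      -- counting the trace set
      have hchoice : ∀ x : U i, ∃ α, α ∈ A ∧ f α i = x.val := by
        intro x
        obtain ⟨α, hα, he⟩ := x.2
        exact ⟨α, hα, he⟩
      choose ch hchA hchv using hchoice
      have hUle : #(U i) ≤ Cardinal.sum (fun s : S => #(D s.val)) := by
        rw [← Cardinal.mk_sigma]
        refine Cardinal.mk_le_of_injective
          (f := fun x : U i =>
            (⟨⟨fun j : Set.Iio i => f (ch x) j.val, ⟨ch x, hchA x, fun j => rfl⟩⟩,
              ⟨x.val, ⟨ch x, hchA x, fun j => rfl, hchv x⟩⟩⟩ :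
              Σ s : S, D s.val)) ?_
        intro x y h
        apply Subtype.ext
        exact congrArg (fun p : (Σ s : S, D s.val) => (p.2 : Ordinal)) h
      have hUcard : #(U i) < Cardinal.lift.{1} (Order.succ (μm i)) := by
        refine lt_of_le_of_lt hUle ?_
        exact Cardinal.sum_lt_of_isRegular (myLiftIsRegular hreg) hScard
          (fun s => hDcard s.val)
      -- from the cardinality bound to the bound on the supremum
      haveI hsm : Small.{0} (U i) := small_subset (hUsub i hi)
      have hshr : #(Shrink.{0} (U i)) < Order.succ (μm i) := by
        have h := Cardinal.lift_mk_shrink''.{1, 0} (U i)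
        refine Cardinal.lift_lt.{0, 1}.mp ?_
        rw [h]
        exact hUcard
      have hsupb : (⨆ b : Shrink.{0} (U i),
          ((equivShrink (U i)).symm b : Ordinal)) < (Order.succ (μm i)).ord := by
        refine Cardinal.iSup_lt_ord_of_isRegular hreg hshr ?_
        intro b
        exact hUsub i hi ((equivShrink (U i)).symm b).2
      refine lt_of_le_of_lt (csSup_le' ?_) hsupb
      intro x hx
      have hxe : x = (((equivShrink (U i)).symm ((equivShrink (U i)) ⟨x, hx⟩)) : Ordinal) := by
        simp
      rw [hxe]
      exact le_ciSup (Ordinal.bddAbove_range _) _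
  -- final contradiction using cofinality of the scale
  obtain ⟨α, hα, i₀, hi₀, hdom⟩ := hf_cof g hkey
  obtain ⟨α', hα'A, hαα'⟩ := hAunbdd α hα
  obtain ⟨i₁, hi₁, hinc⟩ := hf_inc α α' hαα' (hAsub hα'A)
  have hiθ : max i₀ i₁ < θ.ord := max_lt hi₀ hi₁
  have h1 : g (max i₀ i₁) < f α (max i₀ i₁) := hdom _ (le_max_left _ _) hiθ
  have h2 : f α (max i₀ i₁) < f α' (max i₀ i₁) := hinc _ (le_max_right _ _) hiθ
  have h3 : f α' (max i₀ i₁) ≤ g (max i₀ i₁) :=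
    le_csSup (hUbdd _ hiθ) ⟨α', hα'A, rfl⟩
  exact absurd h3 (not_le.mpr (h1.trans h2))
end

section
/- Assume κ < λ are infinite regular cardinals and λ^{<κ} = λ. Then there exists a pair (c, 𝒟) such that: (a) c : [λ]² → {0,1}; (b) 𝒟 is a κ-complete proper filter over λ; (c) if A ⊆ λ and c is constantly 0 on [A]², then A = ∅ mod 𝒟 (i.e., λ \ A ∈ 𝒟); (d) for every 3-element set B ⊆ λ, 0 is among the values of c on [B]² (equivalently, no 3-element subset of λ is 1-monochromatic). -/
open Cardinal Ordinal Set

/-- `D` is a (nontrivial, possibly improper) filter of subsets of `Set.Iio l`. -/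
def IsFilterOn (D : Set (Set Ordinal.{0})) (l : Ordinal.{0}) : Prop :=
  (∀ A ∈ D, A ⊆ Set.Iio l) ∧ (Set.Iio l ∈ D) ∧
  (∀ A ∈ D, ∀ B : Set Ordinal, B ⊆ Set.Iio l → A ⊆ B → B ∈ D) ∧
  (∀ A ∈ D, ∀ B ∈ D, A ∩ B ∈ D)

/-- `D` is `κ`-complete: it is closed under intersections of fewer than `κ` of its
members. -/
def IsKappaComplete (D : Set (Set Ordinal.{0})) (κ : Cardinal.{0}) : Prop :=
  ∀ (ζ : Ordinal.{0}) (A : Ordinal.{0} → Set Ordinal.{0}), 0 < ζ → ζ.card < κ →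
    (∀ i < ζ, A i ∈ D) → (⋂ i ∈ Set.Iio ζ, A i) ∈ D

section Prelim

variable {κ l : Cardinal.{0}} {T : Type}

-- small sets are strictly bounded
theorem small_bounded [LinearOrder T] (hl : l.IsRegular) (hT : #T = l)
    (hseg : ∀ b : T, #(Set.Iio b) < l) (v : Set T) (hv : #v < l) :
    ∃ b : T, ∀ x ∈ v, x < b := by
  have hne : Nonempty T := by
    rw [← Cardinal.mk_ne_zero_iff, hT]; exact hl.pos.ne'
  by_contra hcon
  push_neg at hcon
  -- every b is ≤ some element of v
  have hcover : (Set.univ : Set T) ⊆ ⋃ (x : v), Set.Iic x.1 := by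
    intro b _
    obtain ⟨x, hx, hbx⟩ := hcon b
    exact Set.mem_iUnion.2 ⟨⟨x, hx⟩, hbx⟩
  have hlt : #(⋃ (x : v), Set.Iic x.1) < l := by
    rw [Cardinal.card_iUnion_lt_iff_forall_of_isRegular hl hv]
    intro x
    have : (Set.Iic x.1) ⊆ Set.Iio x.1 ∪ {x.1} := by
      intro y hy
      rcases lt_or_eq_of_le (Set.mem_Iic.1 hy) with h | h
      · exact Or.inl h
      · exact Or.inr h
    refine lt_of_le_of_lt (Cardinal.mk_le_mk_of_subset this) ?_
    refine lt_of_le_of_lt (Cardinal.mk_union_le _ _) ?_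
    apply Cardinal.add_lt_of_lt hl.aleph0_le (hseg _)
    exact lt_of_lt_of_le (Cardinal.mk_singleton _ ▸ Cardinal.one_lt_aleph0) hl.aleph0_le
  have : l ≤ #(⋃ (x : v), Set.Iic x.1) := by
    calc l = #T := hT.symm
    _ = #(Set.univ : Set T) := Cardinal.mk_univ.symm
    _ ≤ _ := Cardinal.mk_le_mk_of_subset hcover
  exact absurd (lt_of_le_of_lt this hlt) (lt_irrefl l)

end Prelim

section Enum

variable {κ l : Cardinal.{0}} {T : Type}

theorem sub_card_le (hl : l.IsRegular) (hκl : κ < l)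
    (hpow : Cardinal.powerlt l κ = l) (hT : #T = l) :
    #{v : Set T // #v < κ} ≤ l := by
  classical
  set K' := κ.ord.ToType with hK'
  set g : K' → Cardinal.{0} :=
    fun i => ((((Ordinal.ToType.mk (o := κ.ord))).symm i : Set.Iio κ.ord) : Ordinal).card with hgdef
  have hg : ∀ i : K', g i < κ := by
    intro i
    rw [hgdef]
    exact Cardinal.lt_ord.1 (((Ordinal.ToType.mk (o := κ.ord))).symm i).2
  have hsurj : Function.Surjective
      (fun p : (Σ i : K', {t : Set T // #t ≤ g i}) => (⟨p.2.1, lt_of_le_of_lt p.2.2 (hg p.1)⟩ :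
        {v : Set T // #v < κ})) := by
    rintro ⟨v, hv⟩
    have h1 : (#v).ord < κ.ord := Cardinal.ord_lt_ord.2 hv
    refine ⟨⟨(Ordinal.ToType.mk (o := κ.ord)) ⟨(#v).ord, h1⟩, ⟨v, ?_⟩⟩, rfl⟩
    rw [hgdef]
    simp only [OrderIso.symm_apply_apply]
    rw [Cardinal.card_ord]
  calc #{v : Set T // #v < κ} ≤ #(Σ i : K', {t : Set T // #t ≤ g i}) :=
        Cardinal.mk_le_of_surjective hsurj
  _ = Cardinal.sum (fun i : K' => #{t : Set T // #t ≤ g i}) := Cardinal.mk_sigma _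
  _ ≤ #K' * ⨆ i : K', #{t : Set T // #t ≤ g i} := Cardinal.sum_le_mk_mul_iSup _
  _ ≤ κ * l := by
      apply mul_le_mul'
      · rw [hK', Cardinal.mk_toType, Cardinal.card_ord]
      · apply ciSup_le'
        intro i
        calc #{t : Set T // #t ≤ g i} ≤ max #T ℵ₀ ^ (g i) := Cardinal.mk_bounded_set_le T (g i)
        _ = l ^ (g i) := by rw [hT, max_eq_left hl.aleph0_le]
        _ ≤ Cardinal.powerlt l κ := Cardinal.le_powerlt l (hg i)
        _ = l := hpow
  _ ≤ l * l := mul_le_mul' (le_of_lt hκl) le_rfl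
  _ = l := Cardinal.mul_eq_self hl.aleph0_le

end Enum

section Enum2

variable {κ l : Cardinal.{0}} {T : Type}

/-- Existence of a rich enumeration of the small subsets of `T`. -/
theorem exists_enum [LinearOrder T] (hκ : κ.IsRegular) (hl : l.IsRegular) (hκl : κ < l)
    (hpow : Cardinal.powerlt l κ = l) (hT : #T = l) (hseg : ∀ b : T, #(Set.Iio b) < l) :
    ∃ u : T → Set T, (∀ b, ∀ x ∈ u b, x < b) ∧ (∀ b, #(u b) < κ) ∧
      ∀ v : Set T, #v < κ → ∀ S : Set T, #S < l →
        ∃ b, b ∉ S ∧ u b = v ∧ ∀ x ∈ v, x < b := by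
  classical
  have hTne : Nonempty T := by
    rw [← Cardinal.mk_ne_zero_iff, hT]; exact hl.pos.ne'
  set Sub := {v : Set T // #v < κ} with hSub
  have hSubne : Nonempty Sub := ⟨⟨∅, by simpa using hκ.pos⟩⟩
  have hle : #(T × Sub) ≤ #T := by
    rw [Cardinal.mk_prod, Cardinal.lift_id, Cardinal.lift_id, hT]
    calc l * #Sub ≤ l * l := mul_le_mul' le_rfl (sub_card_le hl hκl hpow hT)
    _ = l := Cardinal.mul_eq_self hl.aleph0_le
  obtain ⟨e⟩ := (Cardinal.le_def _ _).1 hle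
  set φ : T → T × Sub := Function.invFun e with hφ
  have hφs : Function.Surjective φ := Function.invFun_surjective e.injective
  refine ⟨fun b => if (∀ x ∈ ((φ b).2 : Set T), x < b) then ((φ b).2 : Set T) else ∅,
    ?_, ?_, ?_⟩
  · intro b x hx
    simp only at hx
    by_cases h : ∀ x ∈ ((φ b).2 : Set T), x < b
    · rw [if_pos h] at hx; exact h x hx
    · rw [if_neg h] at hx; exact absurd hx (Set.notMem_empty x)
  · intro b
    simp only
    by_cases h : ∀ x ∈ ((φ b).2 : Set T), x < b
    · rw [if_pos h]; exact (φ b).2.2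
    · rw [if_neg h]; simpa using hκ.pos
  · intro v hv S hS
    -- the set of codes for v is large
    have hbig : l ≤ #{b : T | (φ b).2 = ⟨v, hv⟩} := by
      have : ∀ x : T, ∃ b : T, φ b = (x, ⟨v, hv⟩) := fun x => hφs (x, ⟨v, hv⟩)
      set gg : T → {b : T | (φ b).2 = ⟨v, hv⟩} :=
        fun x => ⟨(this x).choose, by
          have := (this x).choose_spec
          simp only [Set.mem_setOf_eq, this, Prod.snd]⟩ with hgg
      have hinj : Function.Injective gg := by
        intro x y hxy
        have h1 := (this x).choose_spec
        have h2 := (this y).choose_spec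
        rw [hgg] at hxy
        simp only [Subtype.mk.injEq] at hxy
        rw [hxy, h2] at h1
        exact (Prod.mk.injEq _ _ _ _ ▸ h1).1.symm ▸ rfl
      calc l = #T := hT.symm
      _ ≤ _ := Cardinal.mk_le_of_injective hinj
    obtain ⟨b₀, hb₀⟩ := small_bounded hl hT hseg v (lt_trans hv hκl)
    have hBad : #(S ∪ Set.Iio b₀ : Set T) < l :=
      lt_of_le_of_lt (Cardinal.mk_union_le _ _)
        (Cardinal.add_lt_of_lt hl.aleph0_le hS (hseg b₀))
    have hnot : ¬ ({b : T | (φ b).2 = ⟨v, hv⟩} ⊆ S ∪ Set.Iio b₀) := by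
      intro hsub
      exact absurd (lt_of_le_of_lt (le_trans hbig (Cardinal.mk_le_mk_of_subset hsub)) hBad)
        (lt_irrefl l)
    obtain ⟨b, hb1, hb2⟩ := Set.not_subset.1 hnot
    have hb3 : b₀ ≤ b := by
      by_contra h
      exact hb2 (Or.inr (lt_of_not_ge h))
    have hvb : ∀ x ∈ v, x < b := fun x hx => lt_of_lt_of_le (hb₀ x hx) hb3
    refine ⟨b, fun h => hb2 (Or.inl h), ?_, hvb⟩
    have hvv : ((φ b).2 : Set T) = v := by rw [hb1]
    show (if (∀ x ∈ ((φ b).2 : Set T), x < b) then ((φ b).2 : Set T) else ∅) = v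
    rw [if_pos (hvv ▸ hvb), hvv]

end Enum2

section Graph

variable {T : Type} [LinearOrder T]

/-- raw independence w.r.t. the enumeration `u` -/
def RawInd (u : T → Set T) (v : Set T) : Prop := ∀ a ∈ v, ∀ b ∈ v, a < b → a ∉ u b

/-- the edge relation -/
def EdgeT (u : T → Set T) (a b : T) : Prop := a < b ∧ a ∈ u b ∧ RawInd u (u b)

/-- `0`-homogeneous (independent) sets -/
def HomogT (u : T → Set T) (A : Set T) : Prop := ∀ a ∈ A, ∀ b ∈ A, a < b → ¬ EdgeT u a b

theorem homogT_mono {u : T → Set T} {A B : Set T} (h : A ⊆ B) (hB : HomogT u B) : HomogT u A :=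
  fun a ha b hb hab => hB a (h ha) b (h hb) hab

theorem triangle_free {u : T → Set T} {a b c : T} (hab : a < b) (hac : EdgeT u a c)
    (hbc : EdgeT u b c) : ¬ EdgeT u a b := by
  intro h
  exact (hbc.2.2 a hac.2.1 b hbc.2.1 hab) h.2.1

end Graph

section Proper

variable {κ l : Cardinal.{0}} {T : Type} [LinearOrder T]

/-- existence of maximal independent partial transversals -/
theorem exists_maxP {ι : Type} (u : T → Set T) (CU : Set T) (C : ι → Set T)
    (J : Set T) :
    ∃ m, Maximal (· ∈ {v : Set T | v ⊆ CU ∧ v ∩ J = ∅ ∧ RawInd u v ∧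
      ∀ x : ι, ((v ∩ C x).Subsingleton)}) m := by
  apply zorn_subset
  intro ch hch hchain
  refine ⟨⋃₀ ch, ⟨?_, ?_, ?_, ?_⟩, fun s hs => Set.subset_sUnion_of_mem hs⟩
  · exact Set.sUnion_subset fun s hs => (hch hs).1
  · rw [Set.eq_empty_iff_forall_notMem]
    rintro x ⟨hx1, hx2⟩
    obtain ⟨s, hs, hxs⟩ := hx1
    have := (hch hs).2.1
    rw [Set.eq_empty_iff_forall_notMem] at this
    exact this x ⟨hxs, hx2⟩
  · intro a ha b hb hab
    obtain ⟨s, hs, has⟩ := ha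
    obtain ⟨s', hs', hbs'⟩ := hb
    rcases hchain.total hs hs' with h | h
    · exact (hch hs').2.2.1 a (h has) b hbs' hab
    · exact (hch hs).2.2.1 a has b (h hbs') hab
  · intro x a ha b hb
    obtain ⟨⟨s, hs, has⟩, haC⟩ := ha
    obtain ⟨⟨s', hs', hbs'⟩, hbC⟩ := hb
    rcases hchain.total hs hs' with h | h
    · exact (hch hs').2.2.2 x ⟨h has, haC⟩ ⟨hbs', hbC⟩
    · exact (hch hs).2.2.2 x ⟨has, haC⟩ ⟨h hbs', hbC⟩

end Proper

section Core

variable {κ l : Cardinal.{0}} {T : Type} [LinearOrder T]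

theorem core_proper (hκ : κ.IsRegular) (hl : l.IsRegular) (hκl : κ < l) (hT : #T = l)
    (hseg : ∀ b : T, #(Set.Iio b) < l)
    (u : T → Set T) (hu2 : ∀ b, #(u b) < κ)
    (hu3 : ∀ v : Set T, #v < κ → ∀ S : Set T, #S < l → ∃ b, b ∉ S ∧ u b = v ∧ ∀ x ∈ v, x < b)
    (TT : Set (Set T)) (hTT : #TT < κ) (hhom : ∀ A ∈ TT, HomogT u A) :
    ⋃₀ TT ≠ Set.univ := by
  classical
  intro hcov
  have hTTl : #TT < l := lt_trans hTT hκl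
  have hcov' : ∀ x : T, ∃ t : ↥TT, x ∈ t.1 := by
    intro x
    have hx : x ∈ ⋃₀ TT := hcov ▸ Set.mem_univ x
    obtain ⟨s, hs, hxs⟩ := hx
    exact ⟨⟨s, hs⟩, hxs⟩
  set F : T → ↥TT := fun x => (hcov' x).choose with hFdef
  have hF : ∀ x, x ∈ (F x).1 := fun x => (hcov' x).choose_spec
  set C : ↥TT → Set T := fun t => {x | F x = t} with hCdef
  have hxC : ∀ x, x ∈ C (F x) := fun x => rfl
  have hCsub : ∀ t, C t ⊆ t.1 := by
    rintro t x (hx : F x = t)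
    rw [← hx]; exact hF x
  have hCuniq : ∀ {x t}, x ∈ C t → F x = t := fun hx => hx
  set W : Set ↥TT := {t | ¬ #(C t) < l} with hWdef
  set CU : Set T := ⋃ (t : ↥TT) (_ : t ∈ W), C t with hCUdef
  have hCUmem : ∀ {x}, F x ∈ W → x ∈ CU := by
    intro x hx
    exact Set.mem_biUnion hx (hxC x)
  have hcompl : #(CUᶜ : Set T) < l := by
    have hsub : (CUᶜ : Set T) ⊆ ⋃ (t : {t : ↥TT // t ∉ W}), C t.1 := by
      intro x hx
      refine Set.mem_iUnion.2 ⟨⟨F x, fun hFW => hx (hCUmem hFW)⟩, hxC x⟩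
    refine lt_of_le_of_lt (Cardinal.mk_le_mk_of_subset hsub) ?_
    rw [Cardinal.card_iUnion_lt_iff_forall_of_isRegular hl
      (lt_of_le_of_lt (Cardinal.mk_subtype_le _) hTTl)]
    rintro ⟨t, ht⟩
    exact not_not.1 (fun h => ht h)
  have hWne : ∃ t, t ∈ W := by
    by_contra h
    push_neg at h
    have hCU : CU = ∅ := by
      apply Set.eq_empty_iff_forall_notMem.2
      intro x hx
      obtain ⟨t, ht, _⟩ := Set.mem_iUnion₂.1 hx
      exact h t ht
    have huniv : (CUᶜ : Set T) = Set.univ := by rw [hCU, Set.compl_empty]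
    rw [huniv, Cardinal.mk_univ, hT] at hcompl
    exact absurd hcompl (lt_irrefl l)
  -- the transfinite sequence of maximal partial transversals
  set K : Type := κ.ord.ToType with hKdef
  have hKcard : #K = κ := by rw [hKdef, Cardinal.mk_toType, Cardinal.card_ord]
  set P : Set T → Set (Set T) := fun J => {v : Set T | v ⊆ CU ∧ v ∩ J = ∅ ∧ RawInd u v ∧
      ∀ x : ↥TT, ((v ∩ C x).Subsingleton)} with hPdef
  set ustar : K → Set T := (wellFounded_lt).fix
    (C := fun _ => Set T)
    (fun k ih => (exists_maxP u CU C (⋃ (k' : K), ⋃ (_ : k' < k), ih k' ‹k' < k›)).choose)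
    with hustardef
  set J : K → Set T := fun k => ⋃ (k' : K), ⋃ (_ : k' < k), ustar k' with hJdef
  have hustar : ∀ k : K, Maximal (· ∈ P (J k)) (ustar k) := by
    intro k
    have heq : ustar k = (exists_maxP u CU C (J k)).choose := by
      rw [hustardef]
      rw [WellFounded.fix_eq]
    rw [heq]
    exact (exists_maxP u CU C (J k)).choose_spec
  have hmem : ∀ k : K, ustar k ∈ P (J k) := fun k => (hustar k).1
  have hsubJ : ∀ {k' k : K}, k' < k → ustar k' ⊆ J k := by
    intro k' k hkk x hx
    exact Set.mem_iUnion.2 ⟨k', Set.mem_iUnion.2 ⟨hkk, hx⟩⟩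
  have hdisj : ∀ {k' k : K}, k' < k → ∀ {x}, x ∈ ustar k → x ∉ ustar k' := by
    intro k' k hkk x hx hx'
    have h1 := (hmem k).2.1
    rw [Set.eq_empty_iff_forall_notMem] at h1
    exact h1 x ⟨hx, hsubJ hkk hx'⟩
  have hcard_ustar : ∀ k : K, #(ustar k) < κ := by
    intro k
    have hinj : Function.Injective (fun x : ↥(ustar k) => F x.1) := by
      rintro ⟨x, hx⟩ ⟨y, hy⟩ hxy
      simp only at hxy
      have := (hmem k).2.2.2 (F x) ⟨hx, hxC x⟩ ⟨hy, hxy.symm⟩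
      exact Subtype.ext this
    exact lt_of_le_of_lt (Cardinal.mk_le_of_injective hinj) hTT
  by_cases hA : ∃ k : K, ∀ t ∈ W, (ustar k ∩ C t).Nonempty
  · -- Case A : some full transversal exists
    obtain ⟨k, hk⟩ := hA
    set v := ustar k with hvdef
    obtain ⟨b, hbS, hub, hvb⟩ := hu3 v (hcard_ustar k) (CUᶜ) hcompl
    have hbCU : b ∈ CU := not_not.1 hbS
    obtain ⟨t, htW, hbt⟩ := Set.mem_iUnion₂.1 hbCU
    obtain ⟨y, hyv, hyt⟩ := hk t htW
    have hedge : EdgeT u y b := by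
      refine ⟨hvb y hyv, ?_, ?_⟩
      · rw [hub]; exact hyv
      · rw [hub]; exact (hmem k).2.2.1
    exact hhom t.1 t.2 y (hCsub t hyt) b (hCsub t hbt) (hvb y hyv) hedge
  · -- Case B : every transversal misses some big class
    push_neg at hA
    have hA' : ∀ k : K, ∃ t : ↥TT, t ∈ W ∧ ustar k ∩ C t = ∅ := by
      intro k
      obtain ⟨t, htW, ht⟩ := hA k
      exact ⟨t, htW, ht⟩
    set m : K → ↥TT := fun k => (hA' k).choose with hmdef
    have hm1 : ∀ k, m k ∈ W := fun k => (hA' k).choose_spec.1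
    have hm2 : ∀ k, ustar k ∩ C (m k) = ∅ := fun k => (hA' k).choose_spec.2
    have hpig : ∃ t : ↥TT, ¬ #{k : K | m k = t} < κ := by
      by_contra h
      push_neg at h
      have huniv : (Set.univ : Set K) = ⋃ (t : ↥TT), {k : K | m k = t} := by
        ext k
        simp only [Set.mem_univ, true_iff, Set.mem_iUnion, Set.mem_setOf_eq]
        exact ⟨m k, rfl⟩
      have hlt : #(⋃ (t : ↥TT), {k : K | m k = t}) < κ :=
        (Cardinal.card_iUnion_lt_iff_forall_of_isRegular hκ hTT).2 h
      rw [← huniv, Cardinal.mk_univ, hKcard] at hlt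
      exact absurd hlt (lt_irrefl κ)
    obtain ⟨tstar, hQ⟩ := hpig
    set Q : Set K := {k : K | m k = tstar} with hQdef
    have hQne : Q.Nonempty :=
      Set.nonempty_iff_ne_empty.2 (fun h => hQ (by rw [h]; simpa using hκ.pos))
    have htstarW : tstar ∈ W := by
      obtain ⟨k₀, hk₀⟩ := hQne
      have : m k₀ = tstar := hk₀
      rw [← this]
      exact hm1 k₀
    set Bad : Set T := (⋃ k : K, ustar k) ∪ (⋃ k : K, ⋃ y ∈ ustar k, u y) with hBaddef
    have hKl : #K < l := by rw [hKcard]; exact hκl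
    have hBad : #Bad < l := by
      have h1 : #(⋃ k : K, ustar k) < l := by
        rw [Cardinal.card_iUnion_lt_iff_forall_of_isRegular hl hKl]
        exact fun k => lt_trans (hcard_ustar k) hκl
      have h2 : #(⋃ k : K, ⋃ y ∈ ustar k, u y) < l := by
        rw [Cardinal.card_iUnion_lt_iff_forall_of_isRegular hl hKl]
        intro k
        rw [Cardinal.card_biUnion_lt_iff_forall_of_isRegular hl (lt_trans (hcard_ustar k) hκl)]
        exact fun y _ => lt_trans (hu2 y) hκl
      exact lt_of_le_of_lt (Cardinal.mk_union_le _ _) (Cardinal.add_lt_of_lt hl.aleph0_le h1 h2)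
    have hex : ∃ x, x ∈ C tstar ∧ x ∉ Bad := by
      by_contra h
      push_neg at h
      exact htstarW (lt_of_le_of_lt (Cardinal.mk_le_mk_of_subset (fun x hx => h x hx)) hBad)
    obtain ⟨x, hxCt, hxBad⟩ := hex
    have hFx : F x = tstar := hxCt
    have hxn1 : x ∉ ⋃ k : K, ustar k := fun h => hxBad (Or.inl h)
    have hxn2 : x ∉ ⋃ k : K, ⋃ y ∈ ustar k, u y := fun h => hxBad (Or.inr h)
    have hclaim : ∀ k ∈ Q, ∃ y, y ∈ ustar k ∧ y ∈ u x := by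
      intro k hkQ
      have hmk : m k = tstar := hkQ
      have hxnu : x ∉ ustar k := fun h => hxn1 (Set.mem_iUnion.2 ⟨k, h⟩)
      have hnotP : insert x (ustar k) ∉ P (J k) := by
        intro hP
        have hss := (hustar k).2 hP (Set.subset_insert x (ustar k))
        exact hxnu (hss (Set.mem_insert x _))
      have hc1 : insert x (ustar k) ⊆ CU := by
        intro z hz
        rcases Set.mem_insert_iff.1 hz with h | h
        · rw [h]
          apply hCUmem
          rw [hFx]
          exact htstarW
        · exact (hmem k).1 h
      have hc2 : insert x (ustar k) ∩ J k = ∅ := by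
        rw [Set.eq_empty_iff_forall_notMem]
        rintro z ⟨hz1, hz2⟩
        rcases Set.mem_insert_iff.1 hz1 with h | h
        · rw [h] at hz2
          apply hxn1
          obtain ⟨k', hk'⟩ := Set.mem_iUnion.1 hz2
          obtain ⟨_, hk''⟩ := Set.mem_iUnion.1 hk'
          exact Set.mem_iUnion.2 ⟨k', hk''⟩
        · have h1 := (hmem k).2.1
          rw [Set.eq_empty_iff_forall_notMem] at h1
          exact h1 z ⟨h, hz2⟩
      have hc4 : ∀ s : ↥TT, ((insert x (ustar k) ∩ C s).Subsingleton) := by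
        rintro s a ⟨ha1, ha2⟩ b ⟨hb1, hb2⟩
        have hmC : ∀ {z}, z = x → z ∈ C s → s = tstar := by
          intro z hzx hzC
          have : F z = s := hzC
          rw [hzx, hFx] at this
          exact this.symm
        rcases Set.mem_insert_iff.1 ha1 with ha | ha <;>
          rcases Set.mem_insert_iff.1 hb1 with hb | hb
        · rw [ha, hb]
        · exfalso
          have hst : s = tstar := hmC ha ha2
          have h1 := hm2 k
          rw [hmk] at h1
          rw [Set.eq_empty_iff_forall_notMem] at h1
          exact h1 b ⟨hb, by rw [← hst]; exact hb2⟩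
        · exfalso
          have hst : s = tstar := hmC hb hb2
          have h1 := hm2 k
          rw [hmk] at h1
          rw [Set.eq_empty_iff_forall_notMem] at h1
          exact h1 a ⟨ha, by rw [← hst]; exact ha2⟩
        · exact (hmem k).2.2.2 s ⟨ha, ha2⟩ ⟨hb, hb2⟩
      have hRI : ¬ RawInd u (insert x (ustar k)) := fun hRI => hnotP ⟨hc1, hc2, hRI, hc4⟩
      rw [RawInd] at hRI
      push_neg at hRI
      obtain ⟨a, ha, b, hb, hab, haub⟩ := hRI
      rcases Set.mem_insert_iff.1 ha with ha' | ha' <;>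
        rcases Set.mem_insert_iff.1 hb with hb' | hb'
      · exfalso; rw [ha', hb'] at hab; exact lt_irrefl x hab
      · exfalso
        apply hxn2
        rw [ha'] at haub
        exact Set.mem_iUnion.2 ⟨k, Set.mem_iUnion₂.2 ⟨b, hb', haub⟩⟩
      · exact ⟨a, ha', by rw [← hb']; exact haub⟩
      · exact absurd haub ((hmem k).2.2.1 a ha' b hb' hab)
    set y : ↥Q → ↥(u x) :=
      fun k => ⟨(hclaim k.1 k.2).choose, (hclaim k.1 k.2).choose_spec.2⟩ with hydef
    have hyin : ∀ k : ↥Q, (y k : T) ∈ ustar k.1 := fun k => (hclaim k.1 k.2).choose_spec.1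
    have hinj : Function.Injective y := by
      rintro k k' h
      have hyy : (y k : T) = (y k' : T) := by rw [h]
      by_contra hne
      have hkk' : k.1 ≠ k'.1 := fun hh => hne (Subtype.ext hh)
      rcases lt_or_gt_of_ne hkk' with hlt' | hlt'
      · exact hdisj hlt' (hyin k') (hyy ▸ hyin k)
      · exact hdisj hlt' (hyin k) (hyy ▸ hyin k')
    have hle : #Q ≤ #(u x) := Cardinal.mk_le_of_injective hinj
    exact hQ (lt_of_le_of_lt hle (hu2 x))

end Core

section Filter

variable {κ l : Cardinal.{0}} {T : Type} [LinearOrder T]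

/-- the filter generated by complements of 0-homogeneous sets -/
def DT (κ : Cardinal.{0}) (u : T → Set T) : Set (Set T) :=
  {B | ∃ TS : Set (Set T), #TS < κ ∧ (∀ A ∈ TS, HomogT u A) ∧ (⋃₀ TS)ᶜ ⊆ B}

theorem DT_univ (hκ : κ.IsRegular) (u : T → Set T) : Set.univ ∈ DT κ u := by
  refine ⟨∅, by simpa using hκ.pos, by simp, by simp⟩

theorem DT_mono {u : T → Set T} {B1 B2 : Set T} (h1 : B1 ∈ DT κ u) (h12 : B1 ⊆ B2) :
    B2 ∈ DT κ u := by
  obtain ⟨TS, h1, h2, h3⟩ := h1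
  exact ⟨TS, h1, h2, le_trans h3 h12⟩

theorem DT_inter (hκ : κ.IsRegular) {u : T → Set T} {B1 B2 : Set T}
    (h1 : B1 ∈ DT κ u) (h2 : B2 ∈ DT κ u) : B1 ∩ B2 ∈ DT κ u := by
  obtain ⟨T1, h11, h12, h13⟩ := h1
  obtain ⟨T2, h21, h22, h23⟩ := h2
  refine ⟨T1 ∪ T2, ?_, ?_, ?_⟩
  · exact lt_of_le_of_lt (Cardinal.mk_union_le _ _) (Cardinal.add_lt_of_lt hκ.aleph0_le h11 h21)
  · intro A hA
    rcases hA with h | h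
    · exact h12 A h
    · exact h22 A h
  · intro z hz
    rw [Set.mem_compl_iff, Set.sUnion_union] at hz
    exact ⟨h13 (fun h => hz (Or.inl h)), h23 (fun h => hz (Or.inr h))⟩

theorem DT_iInter (hκ : κ.IsRegular) {u : T → Set T} {ι : Type} (hι : #ι < κ)
    (A : ι → Set T) (hA : ∀ i, A i ∈ DT κ u) : (⋂ i, A i) ∈ DT κ u := by
  classical
  set TS : ι → Set (Set T) := fun i => (hA i).choose with hTSdef
  have hTS : ∀ i, #(TS i) < κ ∧ (∀ B ∈ TS i, HomogT u B) ∧ (⋃₀ TS i)ᶜ ⊆ A i :=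
    fun i => (hA i).choose_spec
  refine ⟨⋃ i, TS i, ?_, ?_, ?_⟩
  · rw [Cardinal.card_iUnion_lt_iff_forall_of_isRegular hκ hι]
    exact fun i => (hTS i).1
  · intro B hB
    obtain ⟨i, hi⟩ := Set.mem_iUnion.1 hB
    exact (hTS i).2.1 B hi
  · intro z hz
    apply Set.mem_iInter.2
    intro i
    apply (hTS i).2.2
    intro hmem
    apply hz
    obtain ⟨s, hs, hzs⟩ := hmem
    exact ⟨s, Set.mem_iUnion.2 ⟨i, hs⟩, hzs⟩

theorem DT_compl_homog (hκ : κ.IsRegular) {u : T → Set T} {A : Set T} (hA : HomogT u A) :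
    Aᶜ ∈ DT κ u := by
  refine ⟨{A}, ?_, ?_, ?_⟩
  · rw [Cardinal.mk_singleton]
    exact lt_of_lt_of_le Cardinal.one_lt_aleph0 hκ.aleph0_le
  · intro B hB
    rw [Set.mem_singleton_iff] at hB
    rw [hB]
    exact hA
  · rw [Set.sUnion_singleton]

theorem DT_proper (hκ : κ.IsRegular) (hl : l.IsRegular) (hκl : κ < l) (hT : #T = l)
    (hseg : ∀ b : T, #(Set.Iio b) < l)
    (u : T → Set T) (hu2 : ∀ b, #(u b) < κ)
    (hu3 : ∀ v : Set T, #v < κ → ∀ S : Set T, #S < l → ∃ b, b ∉ S ∧ u b = v ∧ ∀ x ∈ v, x < b) :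
    ∅ ∉ DT κ u := by
  rintro ⟨TS, h1, h2, h3⟩
  apply core_proper hκ hl hκl hT hseg u hu2 hu3 TS h1 h2
  have h4 : (⋃₀ TS)ᶜ = ∅ := Set.subset_empty_iff.1 h3
  rw [← Set.compl_empty]
  rw [← h4, compl_compl]

end Filter


/-- Claim 3.1: if `κ < λ` are infinite regular cardinals and `λ^{<κ} = λ`, then there are
a coloring `c : [λ]² → {0,1}` and a `κ`-complete proper filter `𝒟` over `λ` such that
every `0`-monochromatic set is null mod `𝒟`, and no triple is `1`-monochromatic. -/
theorem stmt4 (κ l : Cardinal.{0}) (hκ : κ.IsRegular) (hl : l.IsRegular) (hκl : κ < l)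
    (hpow : Cardinal.powerlt l κ = l) :
    ∃ (c : Ordinal.{0} → Ordinal.{0} → Fin 2) (D : Set (Set Ordinal.{0})),
      IsFilterOn D l.ord ∧ IsKappaComplete D κ ∧ ∅ ∉ D ∧
      (∀ A : Set Ordinal.{0}, A ⊆ Set.Iio l.ord →
        (∀ a ∈ A, ∀ b ∈ A, a < b → c a b = 0) → (Set.Iio l.ord \ A) ∈ D) ∧
      (∀ α β γ : Ordinal, α < β → β < γ → γ < l.ord →
        c α β = 0 ∨ c α γ = 0 ∨ c β γ = 0) := by
  classical
  set T : Type := l.ord.ToType with hTdef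
  have hT : #T = l := by rw [hTdef, Cardinal.mk_toType, Cardinal.card_ord]
  have hseg : ∀ b : T, #(Set.Iio b) < l := fun b => Cardinal.mk_Iio_ord_toType b
  obtain ⟨u, hu1, hu2, hu3⟩ := exists_enum hκ hl hκl hpow hT hseg
  set e := (Ordinal.ToType.mk (o := l.ord)) with hedef
  set c : Ordinal → Ordinal → Fin 2 := fun a b =>
    if h : a < l.ord ∧ b < l.ord then
      (if EdgeT u (e ⟨a, h.1⟩) (e ⟨b, h.2⟩) then 1 else 0) else 0 with hcdef
  set down : Set Ordinal → Set T := fun S => {z : T | (e.symm z : Ordinal) ∈ S} with hdowndef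
  set D : Set (Set Ordinal) := {B | B ⊆ Set.Iio l.ord ∧ down B ∈ DT κ u} with hDdef
  have hdown_inter : ∀ A B : Set Ordinal, down (A ∩ B) = down A ∩ down B := fun A B => rfl
  have hdown_mono : ∀ {A B : Set Ordinal}, A ⊆ B → down A ⊆ down B := fun h z hz => h hz
  have hdown_Iio : down (Set.Iio l.ord) = Set.univ := by
    apply Set.eq_univ_of_forall
    intro z
    exact (e.symm z).2
  have hdown_diff : ∀ A : Set Ordinal, down (Set.Iio l.ord \ A) = (down A)ᶜ := by
    intro A
    ext z
    simp only [hdowndef, Set.mem_setOf_eq, Set.mem_diff, Set.mem_compl_iff]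
    exact ⟨fun h => h.2, fun h => ⟨(e.symm z).2, h⟩⟩
  have hc0 : ∀ {a b : Ordinal} (ha : a < l.ord) (hb : b < l.ord),
      (c a b = 0 ↔ ¬ EdgeT u (e ⟨a, ha⟩) (e ⟨b, hb⟩)) := by
    intro a b ha hb
    simp only [hcdef]
    rw [dif_pos ⟨ha, hb⟩]
    constructor
    · intro h hedge
      rw [if_pos hedge] at h
      exact absurd h (by decide)
    · intro h
      rw [if_neg h]
  refine ⟨c, D, ?_, ?_, ?_, ?_, ?_⟩
  · -- IsFilterOn
    refine ⟨fun A hA => hA.1, ⟨subset_rfl, hdown_Iio ▸ DT_univ hκ u⟩, ?_, ?_⟩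
    · intro A hA B hBsub hAB
      exact ⟨hBsub, DT_mono hA.2 (hdown_mono hAB)⟩
    · intro A hA B hB
      exact ⟨fun x hx => hA.1 hx.1, (hdown_inter A B) ▸ DT_inter hκ hA.2 hB.2⟩
  · -- IsKappaComplete
    intro ζ A h0 hζ hA
    have hsub : (⋂ i ∈ Set.Iio ζ, A i) ⊆ Set.Iio l.ord := by
      intro x hx
      exact (hA 0 h0).1 (Set.mem_iInter₂.1 hx 0 h0)
    set ι := ζ.ToType with hιdef
    have hι : #ι < κ := by rw [hιdef, Cardinal.mk_toType]; exact hζ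
    set B : ι → Set T := fun j => down (A (((Ordinal.ToType.mk (o := ζ))).symm j : Ordinal))
      with hBdef
    have hBmem : ∀ j, B j ∈ DT κ u := fun j => (hA _ (((Ordinal.ToType.mk (o := ζ))).symm j).2).2
    have heq : down (⋂ i ∈ Set.Iio ζ, A i) = ⋂ j, B j := by
      ext z
      simp only [hdowndef, hBdef, Set.mem_setOf_eq, Set.mem_iInter]
      constructor
      · intro h j
        exact h _ (((Ordinal.ToType.mk (o := ζ))).symm j).2
      · intro h i hi
        have h2 := h (((Ordinal.ToType.mk (o := ζ))) ⟨i, hi⟩)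
        rwa [OrderIso.symm_apply_apply] at h2
    exact ⟨hsub, heq ▸ DT_iInter hκ hι B hBmem⟩
  · -- properness
    intro h
    have hde : down ∅ = ∅ := by
      ext z
      simp [hdowndef]
    rw [hDdef] at h
    have h2 := h.2
    rw [hde] at h2
    exact DT_proper hκ hl hκl hT hseg u hu2 hu3 h2
  · -- 0-homogeneous sets are null
    intro A hAsub hhom
    refine ⟨Set.diff_subset, ?_⟩
    rw [hdown_diff]
    apply DT_compl_homog hκ
    intro a ha b hb hab
    have hα : ((e.symm a : Set.Iio l.ord) : Ordinal) < l.ord := (e.symm a).2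
    have hβ : ((e.symm b : Set.Iio l.ord) : Ordinal) < l.ord := (e.symm b).2
    have hlt : ((e.symm a : Set.Iio l.ord) : Ordinal) < ((e.symm b : Set.Iio l.ord) : Ordinal) := by
      have h2 : e.symm a < e.symm b := by
        rw [OrderIso.lt_iff_lt]
        exact hab
      exact h2
    have h0 := hhom _ ha _ hb hlt
    have hea : e ⟨((e.symm a : Set.Iio l.ord) : Ordinal), hα⟩ = a := by
      have h3 : (⟨((e.symm a : Set.Iio l.ord) : Ordinal), hα⟩ : ↥(Set.Iio l.ord)) = e.symm a :=
        Subtype.ext rfl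
      rw [h3, OrderIso.apply_symm_apply]
    have heb : e ⟨((e.symm b : Set.Iio l.ord) : Ordinal), hβ⟩ = b := by
      have h3 : (⟨((e.symm b : Set.Iio l.ord) : Ordinal), hβ⟩ : ↥(Set.Iio l.ord)) = e.symm b :=
        Subtype.ext rfl
      rw [h3, OrderIso.apply_symm_apply]
    intro hedge
    apply (hc0 hα hβ).1 h0
    rw [hea, heb]
    exact hedge
  · -- no 1-monochromatic triple
    intro α β γ hab hbc hcl
    have hβ : β < l.ord := lt_trans hbc hcl
    have hα : α < l.ord := lt_trans hab hβ
    have hxy : e ⟨α, hα⟩ < e ⟨β, hβ⟩ := by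
      rw [OrderIso.lt_iff_lt]
      exact hab
    by_cases h1 : EdgeT u (e ⟨α, hα⟩) (e ⟨β, hβ⟩)
    · by_cases h2 : EdgeT u (e ⟨α, hα⟩) (e ⟨γ, hcl⟩)
      · by_cases h3 : EdgeT u (e ⟨β, hβ⟩) (e ⟨γ, hcl⟩)
        · exact absurd h1 (triangle_free hxy h2 h3)
        · right; right; exact (hc0 hβ hcl).2 h3
      · right; left; exact (hc0 hα hcl).2 h2
    · left; exact (hc0 hα hβ).2 h1
end

section
/- Suppose: (A) λ is a cardinal with θ = cf(λ) < λ; λ = sup_{i<θ} κ_i = sup_{i<θ} λ_i; for each i < θ, κ_i and λ_i are regular cardinals with κ_i < λ_i and λ_i^{<κ_i} = λ_i; and ∏_{i<j} λ_i < κ_j for every j < θ. (B) For each i < θ, 𝒟_i is a κ_i-complete proper filter over λ_i; c_i : [λ_i]² → {0,1}; if A ⊆ λ_i and c_i is constantly 0 on [A]² then λ_i \ A ∈ 𝒟_i; and whenever α < β < γ < λ_i and c_i({α,β}) = c_i({α,γ}) = c_i({β,γ}) = ε, then ε = 0. (C) (η_α : α < λ⁺) is a sequence of pairwise distinct functions with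 η_α ∈ ∏_{i<θ} λ_i, such that: whenever A_i ∈ 𝒟_i for every i < θ, there is α₀ < λ⁺ such that for every α with α₀ ≤ α < λ⁺ there is i_α < θ so that η_α(i) ∈ A_i whenever i_α ≤ i < θ. Then λ⁺ ↛ (λ⁺, (3)_θ)²; that is, there is a coloring c : [λ⁺]² → θ with no A ⊆ λ⁺ of cardinality λ⁺ on which c is constantly 0 and no 3-element set on which c is constantly equal to some γ with 0 < γ < θ. -/
open Cardinal Ordinal Set

/-- The negative partition relation `κ ↛ (κ, (3)_θ)²`. -/
def NegPartitionRel (κ θ : Cardinal.{0}) : Prop :=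
  ∃ c : Ordinal.{0} → Ordinal.{0} → Ordinal.{0},
    (∀ α β : Ordinal, α < β → β < κ.ord → c α β < θ.ord) ∧
    (¬ ∃ A : Set Ordinal.{0}, A ⊆ Set.Iio κ.ord ∧ #A = Cardinal.lift.{1} κ ∧
        ∀ α ∈ A, ∀ β ∈ A, α < β → c α β = 0) ∧
    (¬ ∃ α β γ ξ : Ordinal, α < β ∧ β < γ ∧ γ < κ.ord ∧
        0 < ξ ∧ ξ < θ.ord ∧ c α β = ξ ∧ c α γ = ξ ∧ c β γ = ξ)

noncomputable def fd (η : Ordinal.{0} → Ordinal.{0} → Ordinal.{0}) (α β : Ordinal.{0}) :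
    Ordinal.{0} :=
  sInf {i | η α i ≠ η β i}

noncomputable def col (c : Ordinal.{0} → Ordinal.{0} → Ordinal.{0} → Fin 2)
    (η : Ordinal.{0} → Ordinal.{0} → Ordinal.{0}) (α β : Ordinal.{0}) : Ordinal.{0} :=
  if c (fd η α β) (min (η α (fd η α β)) (η β (fd η α β)))
      (max (η α (fd η α β)) (η β (fd η α β))) = 1
  then fd η α β + 1 else 0

lemma fd_symm (η : Ordinal.{0} → Ordinal.{0} → Ordinal.{0}) (α β : Ordinal.{0}) :
    fd η α β = fd η β α := by
  unfold fd
  congr 1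
  ext i
  exact ne_comm

lemma col_symm (c : Ordinal.{0} → Ordinal.{0} → Ordinal.{0} → Fin 2)
    (η : Ordinal.{0} → Ordinal.{0} → Ordinal.{0}) (α β : Ordinal.{0}) :
    col c η α β = col c η β α := by
  unfold col
  rw [fd_symm η α β, min_comm, max_comm]

lemma fin2_eq_zero (v : Fin 2) (h : v ≠ 1) : v = 0 := by omega

lemma ord_succ_cancel (a b : Ordinal.{0}) (h : a + 1 = b + 1) : a = b := by
  rw [Ordinal.add_one_eq_succ, Ordinal.add_one_eq_succ] at h
  exact Order.succ_injective h

/-- Theorem 3.2: from filters `𝒟_i`, colorings `c_i` and a sequence `(η_α : α < λ⁺)` as in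
hypotheses (A), (B), (C), one gets `λ⁺ ↛ (λ⁺, (3)_θ)²`. -/
theorem stmt5 (l θ : Cardinal.{0}) (κm lm : Ordinal.{0} → Cardinal.{0})
    (D : Ordinal.{0} → Set (Set Ordinal.{0}))
    (c : Ordinal.{0} → Ordinal.{0} → Ordinal.{0} → Fin 2)
    (η : Ordinal.{0} → Ordinal.{0} → Ordinal.{0})
    -- (A)
    (hA1 : θ = l.ord.cof) (hA1' : θ < l)
    (hA2κ : l = ⨆ i : Set.Iio θ.ord, κm i.val)
    (hA2l : l = ⨆ i : Set.Iio θ.ord, lm i.val)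
    (hA3 : ∀ i < θ.ord, (κm i).IsRegular ∧ (lm i).IsRegular ∧ κm i < lm i ∧
      Cardinal.powerlt (lm i) (κm i) = lm i)
    (hA4 : ∀ j < θ.ord,
      Cardinal.prod (fun i : Set.Iio j => lm i.val) < Cardinal.lift.{1} (κm j))
    -- (B)
    (hB1 : ∀ i < θ.ord, IsFilterOn (D i) (lm i).ord ∧ IsKappaComplete (D i) (κm i) ∧
      ∅ ∉ D i)
    (hB3 : ∀ i < θ.ord, ∀ A : Set Ordinal.{0}, A ⊆ Set.Iio (lm i).ord →
      (∀ a ∈ A, ∀ b ∈ A, a < b → c i a b = 0) → (Set.Iio (lm i).ord \ A) ∈ D i)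
    (hB4 : ∀ i < θ.ord, ∀ α β γ : Ordinal, α < β → β < γ → γ < (lm i).ord →
      ∀ ε : Fin 2, c i α β = ε → c i α γ = ε → c i β γ = ε → ε = 0)
    -- (C)
    (hC1 : ∀ α < (Order.succ l).ord, ∀ i < θ.ord, η α i < (lm i).ord)
    (hC2 : ∀ α β : Ordinal, α < (Order.succ l).ord → β < (Order.succ l).ord → α ≠ β →
      ∃ i < θ.ord, η α i ≠ η β i)
    (hC3 : ∀ A : Ordinal.{0} → Set Ordinal.{0}, (∀ i < θ.ord, A i ∈ D i) →
      ∃ α₀ < (Order.succ l).ord, ∀ α, α₀ ≤ α → α < (Order.succ l).ord →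
        ∃ iα < θ.ord, ∀ i, iα ≤ i → i < θ.ord → η α i ∈ A i) :
    NegPartitionRel (Order.succ l) θ := by
  -- θ is nonzero
  have hθ0 : θ ≠ 0 := by
    rintro rfl
    have hempty : IsEmpty ↥(Set.Iio (0 : Cardinal).ord) := by
      constructor
      rintro ⟨x, hx⟩
      rw [Cardinal.ord_zero] at hx
      exact absurd (show x < 0 from hx) (not_lt_of_ge zero_le)
    have hl0 : l = 0 := by
      rw [hA2l, ciSup_of_empty]
      rfl
    rw [hl0] at hA1'
    exact absurd hA1' (lt_irrefl _)
  have hθpos : (0 : Ordinal) < θ.ord := by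
    rw [← Cardinal.ord_zero]
    exact Cardinal.ord_lt_ord.mpr ((zero_le (a := θ)).lt_of_ne (Ne.symm hθ0))
  have hA30 := hA3 0 hθpos
  have hκ0 : ℵ₀ ≤ κm 0 := hA30.1.aleph0_le
  have hlm0_le : lm 0 ≤ l := by
    rw [hA2l]
    have hsmall : Small.{0} (Set.range (fun i : ↥(Set.Iio θ.ord) => lm i.val)) :=
      small_range _
    exact le_ciSup (Cardinal.bddAbove_iff_small.mpr hsmall) ⟨0, hθpos⟩
  have hlinf : ℵ₀ ≤ l := hκ0.trans ((le_of_lt hA30.2.2.1).trans hlm0_le)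
  have hθinf : ℵ₀ ≤ θ := by
    rw [hA1]
    exact Ordinal.aleph0_le_cof.mpr (Cardinal.isSuccLimit_ord hlinf)
  have hTlim : Order.IsSuccLimit θ.ord := Cardinal.isSuccLimit_ord hθinf
  -- basic facts about first difference
  have hfdlt : ∀ α β, α < (Order.succ l).ord → β < (Order.succ l).ord → α ≠ β →
      fd η α β < θ.ord ∧ η α (fd η α β) ≠ η β (fd η α β) ∧
      ∀ j < fd η α β, η α j = η β j := by
    intro α β hα hβ hne
    obtain ⟨i0, hi0, hne0⟩ := hC2 α β hα hβ hne
    have hS : {i | η α i ≠ η β i}.Nonempty := ⟨i0, hne0⟩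
    refine ⟨lt_of_le_of_lt (csInf_le' hne0) hi0, csInf_mem hS, ?_⟩
    intro j hj
    by_contra hcon
    exact absurd hj (not_lt.mpr (csInf_le' hcon))
  unfold NegPartitionRel
  refine ⟨col c η, ?_, ?_, ?_⟩
  · -- coloring bounded by θ
    intro α β hαβ hβ
    have hα : α < (Order.succ l).ord := hαβ.trans hβ
    unfold col
    split
    · rw [Ordinal.add_one_eq_succ]
      exact hTlim.succ_lt (hfdlt α β hα hβ hαβ.ne).1
    · exact hθpos
  · -- no large 0-homogeneous set
    rintro ⟨A, hAsub, hAcard, hA0⟩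
    have main : ∀ i, i < θ.ord → ∃ S, S ∈ D i ∧ ∀ α ∈ A, η α i ∉ S := by
      intro i hiT
      obtain ⟨hfil, hcomp, hproper⟩ := hB1 i hiT
      set Q : Set (↥(Set.Iio i) → Ordinal.{0}) :=
        Set.range (fun α : ↥A => fun j : ↥(Set.Iio i) => η α.val j.val) with hQdef
      set Bs : (↥(Set.Iio i) → Ordinal.{0}) → Set Ordinal.{0} := fun t =>
        {y | ∃ β ∈ A, (∀ j : ↥(Set.Iio i), η β j.val = t j) ∧ η β i = y} with hBsdef
      have hBsub : ∀ t, Bs t ⊆ Set.Iio (lm i).ord := by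
        rintro t y ⟨β, hβ, _, rfl⟩
        exact hC1 β (hAsub hβ) i hiT
      have hBhom : ∀ t, ∀ y ∈ Bs t, ∀ z ∈ Bs t, y < z → c i y z = 0 := by
        rintro t y ⟨β, hβ, hβt, hβy⟩ z ⟨γ, hγ, hγt, hγz⟩ hyz
        have hβγ : β ≠ γ := by
          rintro rfl
          rw [hβy] at hγz
          exact absurd hγz hyz.ne
        have hcol : col c η β γ = 0 := by
          rcases lt_or_gt_of_ne hβγ with h | h
          · exact hA0 β hβ γ hγ h
          · rw [col_symm]
            exact hA0 γ hγ β hβ h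
        have hfdi : fd η β γ = i := by
          have h1 : η β i ≠ η γ i := by
            rw [hβy, hγz]
            exact hyz.ne
          refine le_antisymm (csInf_le' h1) (le_csInf ⟨i, h1⟩ ?_)
          intro j hj
          by_contra hcon
          push_neg at hcon
          exact hj ((hβt ⟨j, hcon⟩).trans (hγt ⟨j, hcon⟩).symm)
        have hcc : c i (min (η β i) (η γ i)) (max (η β i) (η γ i)) = 0 := by
          unfold col at hcol
          rw [hfdi] at hcol
          split at hcol
          · exfalso
            rw [Ordinal.add_one_eq_succ] at hcol
            exact Ordinal.succ_ne_zero i hcol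
          · next h => exact fin2_eq_zero _ h
        rwa [hβy, hγz, min_eq_left hyz.le, max_eq_right hyz.le] at hcc
      -- cardinality of the set of traces
      have hQcard : #↥Q < Cardinal.lift.{1} (κm i) := by
        have hf : ∀ (q : ↥Q) (j : ↥(Set.Iio i)), q.val j < (lm j.val).ord := by
          rintro ⟨t, α, rfl⟩ j
          exact hC1 α.val (hAsub α.prop) j.val (lt_trans j.prop hiT)
        have hinj : Function.Injective
            (fun q : ↥Q => (fun j : ↥(Set.Iio i) =>
              (⟨q.val j, hf q j⟩ : ↥(Set.Iio ((lm j.val).ord))))) := by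
          intro q1 q2 h
          apply Subtype.ext
          funext j
          exact congrArg Subtype.val (congrFun h j)
        have h1 : #↥Q ≤ #(∀ j : ↥(Set.Iio i), ↥(Set.Iio ((lm j.val).ord))) :=
          Cardinal.mk_le_of_injective hinj
        have h2 : #(∀ j : ↥(Set.Iio i), ↥(Set.Iio ((lm j.val).ord))) =
            Cardinal.prod (fun j : ↥(Set.Iio i) => lm j.val) := by
          rw [Cardinal.mk_pi]
          have h3 : (fun j : ↥(Set.Iio i) => #↥(Set.Iio ((lm j.val).ord))) =
              (fun j : ↥(Set.Iio i) => Cardinal.lift.{1} (lm j.val)) := by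
            funext j
            rw [Ordinal.mk_Iio_ordinal, Cardinal.card_ord]
          rw [h3, ← Cardinal.lift_prod, Cardinal.lift_id]
        exact lt_of_le_of_lt (h1.trans_eq h2) (hA4 i hiT)
      have hAne : A.Nonempty := by
        by_contra h
        rw [Set.not_nonempty_iff_eq_empty] at h
        rw [h] at hAcard
        simp only [Cardinal.mk_emptyCollection] at hAcard
        have : Order.succ l = 0 := (Cardinal.lift_eq_zero).mp hAcard.symm
        have h2 : (0 : Cardinal) < Order.succ l :=
          lt_of_le_of_lt (zero_le (a := l)) (Order.lt_succ l)
        rw [this] at h2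
        exact absurd h2 (lt_irrefl _)
      have hQne : Q.Nonempty := by
        obtain ⟨α, hα⟩ := hAne
        exact ⟨_, ⟨⟨α, hα⟩, rfl⟩⟩
      obtain ⟨μ, -, hμ⟩ := Cardinal.le_lift_iff.mp hQcard.le
      have hμκ : μ < κm i := by
        rw [← Cardinal.lift_lt.{0,1}, hμ]
        exact hQcard
      have hζpos : (0 : Ordinal) < μ.ord := by
        rcases eq_or_ne μ 0 with rfl | h
        · exfalso
          obtain ⟨q, hq⟩ := hQne
          have h0 : #↥Q = 0 := by
            rw [← hμ, Cardinal.lift_eq_zero]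
          rw [Cardinal.mk_eq_zero_iff] at h0
          exact h0.elim ⟨q, hq⟩
        · rw [← Cardinal.ord_zero]
          exact Cardinal.ord_lt_ord.mpr ((zero_le (a := μ)).lt_of_ne (Ne.symm h))
      have hbij : Nonempty (↥(Set.Iio μ.ord) ≃ ↥Q) := by
        rw [← Cardinal.eq, Ordinal.mk_Iio_ordinal, Cardinal.card_ord, hμ]
      obtain ⟨F⟩ := hbij
      set fam : Ordinal.{0} → Set Ordinal.{0} := fun x =>
        if h : x < μ.ord then Set.Iio (lm i).ord \ Bs (F ⟨x, h⟩).val else ∅ with hfamdef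
      have hfammem : ∀ x < μ.ord, fam x ∈ D i := by
        intro x hx
        have : fam x = Set.Iio (lm i).ord \ Bs (F ⟨x, hx⟩).val := by
          rw [hfamdef]
          exact dif_pos hx
        rw [this]
        exact hB3 i hiT _ (hBsub _) (hBhom _)
      refine ⟨⋂ x ∈ Set.Iio μ.ord, fam x,
        hcomp μ.ord fam hζpos (by rwa [Cardinal.card_ord]) hfammem, ?_⟩
      intro α hα hmem
      have htQ : (fun j : ↥(Set.Iio i) => η α j.val) ∈ Q := ⟨⟨α, hα⟩, rfl⟩
      set q : ↥Q := ⟨_, htQ⟩ with hqdef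
      set x : ↥(Set.Iio μ.ord) := F.symm q with hxdef
      have hx : x.val < μ.ord := x.prop
      have h1 : η α i ∈ fam x.val := by
        exact Set.mem_iInter₂.mp hmem x.val hx
      have h2 : fam x.val = Set.Iio (lm i).ord \ Bs (F ⟨x.val, hx⟩).val := by
        rw [hfamdef]
        exact dif_pos hx
      rw [h2] at h1
      apply h1.2
      have hFx : F ⟨x.val, hx⟩ = q := by
        have : (⟨x.val, hx⟩ : ↥(Set.Iio μ.ord)) = x := rfl
        rw [this, hxdef]
        exact F.apply_symm_apply q
      rw [hFx]
      exact ⟨α, hα, fun j => rfl, rfl⟩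
    choose S hS1 hS2 using main
    set AA : Ordinal.{0} → Set Ordinal.{0} := fun i =>
      if h : i < θ.ord then S i h else ∅ with hAAdef
    have hAAmem : ∀ i < θ.ord, AA i ∈ D i := by
      intro i hi
      have : AA i = S i hi := by
        rw [hAAdef]
        exact dif_pos hi
      rw [this]
      exact hS1 i hi
    obtain ⟨α₀, hα₀L, hα₀⟩ := hC3 AA hAAmem
    have hnsub : ¬ A ⊆ Set.Iio α₀ := by
      intro hsub
      have h1 : #↥A ≤ #↥(Set.Iio α₀) := Cardinal.mk_le_mk_of_subset hsub
      rw [hAcard, Ordinal.mk_Iio_ordinal] at h1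
      have h2 : α₀.card ≤ l := Order.lt_succ_iff.mp (Cardinal.lt_ord.mp hα₀L)
      have h3 : Order.succ l ≤ l :=
        Cardinal.lift_le.mp (h1.trans (Cardinal.lift_le.mpr h2))
      exact absurd h3 (not_le.mpr (Order.lt_succ l))
    obtain ⟨α, hαA, hα0⟩ := Set.not_subset.mp hnsub
    have hαL : α < (Order.succ l).ord := hAsub hαA
    obtain ⟨iα, hiαT, hiα⟩ := hα₀ α (not_lt.mp hα0) hαL
    have hmem := hiα iα le_rfl hiαT
    have hAAiα : AA iα = S iα hiαT := by
      rw [hAAdef]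
      exact dif_pos hiαT
    rw [hAAiα] at hmem
    exact hS2 iα hiαT α hαA hmem
  · -- no monochromatic triangle in a nonzero color
    rintro ⟨α, β, γ, ξ, hab, hbg, hgL, hξ0, hξT, e1, e2, e3⟩
    have haL : α < (Order.succ l).ord := (hab.trans hbg).trans hgL
    have hbL : β < (Order.succ l).ord := hbg.trans hgL
    have ext : ∀ x y, col c η x y = ξ →
        c (fd η x y) (min (η x (fd η x y)) (η y (fd η x y)))
          (max (η x (fd η x y)) (η y (fd η x y))) = 1 ∧ ξ = fd η x y + 1 := by
      intro x y h
      unfold col at h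
      split at h
      · next hcond => exact ⟨hcond, h.symm⟩
      · exact absurd h.symm hξ0.ne'
    obtain ⟨C1, E1⟩ := ext α β e1
    obtain ⟨C2, E2⟩ := ext α γ e2
    obtain ⟨C3, E3⟩ := ext β γ e3
    have hI2 : fd η α γ = fd η α β := ord_succ_cancel _ _ (E2.symm.trans E1)
    have hI3 : fd η β γ = fd η α β := ord_succ_cancel _ _ (E3.symm.trans E1)
    set i := fd η α β with hidef
    have hiT : i < θ.ord := (hfdlt α β haL hbL hab.ne).1
    have hne_ab : η α i ≠ η β i := (hfdlt α β haL hbL hab.ne).2.1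
    have hne_ad : η α i ≠ η γ i := by
      have h := (hfdlt α γ haL hgL (hab.trans hbg).ne).2.1
      rwa [hI2] at h
    have hne_bd : η β i ≠ η γ i := by
      have h := (hfdlt β γ hbL hgL hbg.ne).2.1
      rwa [hI3] at h
    rw [hI2] at C2
    rw [hI3] at C3
    set a := η α i
    set b := η β i
    set d := η γ i
    have ha : a < (lm i).ord := hC1 α haL i hiT
    have hb : b < (lm i).ord := hC1 β hbL i hiT
    have hd : d < (lm i).ord := hC1 γ hgL i hiT
    have key : ∀ x y z, x < y → y < z → z < (lm i).ord →
        c i x y = 1 → c i x z = 1 → c i y z = 1 → False := by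
      intro x y z h1 h2 h3 f1 f2 f3
      have := hB4 i hiT x y z h1 h2 h3 1 f1 f2 f3
      exact absurd this (by decide)
    rcases lt_or_gt_of_ne hne_ab with h1 | h1
    · rcases lt_or_gt_of_ne hne_ad with h2 | h2
      · rcases lt_or_gt_of_ne hne_bd with h3 | h3
        · -- a < b < d
          rw [min_eq_left h1.le, max_eq_right h1.le] at C1
          rw [min_eq_left h2.le, max_eq_right h2.le] at C2
          rw [min_eq_left h3.le, max_eq_right h3.le] at C3
          exact key a b d h1 h3 hd C1 C2 C3
        · -- a < d < b
          rw [min_eq_left h1.le, max_eq_right h1.le] at C1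
          rw [min_eq_left h2.le, max_eq_right h2.le] at C2
          rw [min_eq_right h3.le, max_eq_left h3.le] at C3
          exact key a d b h2 h3 hb C2 C1 C3
      · -- d < a < b
        rw [min_eq_left h1.le, max_eq_right h1.le] at C1
        rw [min_eq_right h2.le, max_eq_left h2.le] at C2
        have h3 : d < b := h2.trans h1
        rw [min_eq_right h3.le, max_eq_left h3.le] at C3
        exact key d a b h2 h1 hb C2 C3 C1
    · rcases lt_or_gt_of_ne hne_bd with h2 | h2
      · rcases lt_or_gt_of_ne hne_ad with h3 | h3
        · -- b < a < d
          rw [min_eq_right h1.le, max_eq_left h1.le] at C1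
          rw [min_eq_left h3.le, max_eq_right h3.le] at C2
          rw [min_eq_left h2.le, max_eq_right h2.le] at C3
          exact key b a d h1 h3 hd C1 C3 C2
        · -- b < d < a
          rw [min_eq_right h1.le, max_eq_left h1.le] at C1
          rw [min_eq_right h3.le, max_eq_left h3.le] at C2
          rw [min_eq_left h2.le, max_eq_right h2.le] at C3
          exact key b d a h2 h3 ha C3 C1 C2
      · -- d < b < a
        rw [min_eq_right h1.le, max_eq_left h1.le] at C1
        rw [min_eq_right h2.le, max_eq_left h2.le] at C3
        have h3 : d < a := h2.trans h1
        rw [min_eq_right h3.le, max_eq_left h3.le] at C2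
        exact key d b a h2 h1 ha C3 C2 C1
end

section
/- Let θ be an infinite regular cardinal and (λ_i : i < θ) a sequence of cardinals. Let (η_α : α < δ) be a sequence of pairwise distinct functions with η_α ∈ ∏_{i<θ} λ_i, and for each i < θ let c_i : [λ_i]² → {0,1} be a coloring such that whenever α < β < γ < λ_i and c_i({α,β}) = c_i({α,γ}) = c_i({β,γ}) = ε, then ε = 0. Define c : [δ]² → θ × {0,1} by: for α < β < δ, let i = i(α,β) be the least j with η_α(j) ≠ η_β(j) and ε = c_i({η_α(i), η_β(i)}); set c({α,β}) = (i, ε) if ε > 0, and c({α,β}) = (0,0) otherwise. Then for every i < θ, no 3-element subset of δ is constantly colored (i, 1) by c. -/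
/-! If all three pairs of `α < β < γ` get colour `(i, 1)`, then `i` is where each pair first
differs, so `η α i, η β i, η γ i` are three distinct points of `λ_i` spanning a triangle of
colour `1` under `c i`, which the hypothesis on `c i` forbids once the points are sorted. -/

open Cardinal Ordinal Set

section FirstDifference

variable {ι β : Type*} [ConditionallyCompleteLinearOrder ι] [WellFoundedLT ι] {f g : ι → β}

theorem apply_sInf_ne_of_exists_ne (hfg : ∃ j, f j ≠ g j) :
    f (sInf {j | f j ≠ g j}) ≠ g (sInf {j | f j ≠ g j}) :=
  csInf_mem hfg

theorem ne_and_eq_one_of_ite_sInf_eq [Zero ι] {c : ι → β → β → Fin 2} {i : ι}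
    (hfg : ∃ j, f j ≠ g j)
    (h : (if c (sInf {j | f j ≠ g j}) (f (sInf {j | f j ≠ g j})) (g (sInf {j | f j ≠ g j})) = 1
        then (sInf {j | f j ≠ g j}, (1 : Fin 2)) else (0, 0)) = (i, 1)) :
    f i ≠ g i ∧ c i (f i) (g i) = 1 := by
  split_ifs at h with hc
  · obtain rfl : sInf {j | f j ≠ g j} = i := congrArg Prod.fst h
    exact ⟨apply_sInf_ne_of_exists_ne hfg, hc⟩
  · exact absurd (congrArg Prod.snd h) zero_ne_one

end FirstDifference

section Triangles

variable {α M : Type*} [LinearOrder α] {f : α → α → M} {u : α} {ε : M} {a b g : α}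

theorem not_monochromatic_triangle_of_lt_of_lt (hsymm : ∀ a b, f a b = f b a)
    (hord : ∀ a b g, a < b → b < g → g < u → f a b = ε → f a g = ε → f b g = ε → False)
    (hab : a < b) (hag : a < g) (hbg : b ≠ g) (hb : b < u) (hg : g < u)
    (eab : f a b = ε) (eag : f a g = ε) (ebg : f b g = ε) : False := by
  rcases hbg.lt_or_gt with hbg | hgb
  · exact hord a b g hab hbg hg eab eag ebg
  · exact hord a g b hag hgb hb eag eab ((hsymm g b).trans ebg)

theorem not_monochromatic_triangle_of_not_ordered (hsymm : ∀ a b, f a b = f b a)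
    (hord : ∀ a b g, a < b → b < g → g < u → f a b = ε → f a g = ε → f b g = ε → False)
    (hab : a ≠ b) (hag : a ≠ g) (hbg : b ≠ g) (ha : a < u) (hb : b < u) (hg : g < u)
    (eab : f a b = ε) (eag : f a g = ε) (ebg : f b g = ε) : False := by
  have eba : f b a = ε := (hsymm b a).trans eab
  have ega : f g a = ε := (hsymm g a).trans eag
  have egb : f g b = ε := (hsymm g b).trans ebg
  rcases hab.lt_or_gt with hab | hba
  · rcases hag.lt_or_gt with hag | hga
    · exact not_monochromatic_triangle_of_lt_of_lt hsymm hord hab hag hbg hb hg eab eag ebg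
    · exact not_monochromatic_triangle_of_lt_of_lt hsymm hord hga (hga.trans hab) hab.ne ha hb
        ega egb eab
  · rcases hbg.lt_or_gt with hbg | hgb
    · exact not_monochromatic_triangle_of_lt_of_lt hsymm hord hba hbg hag ha hg eba ebg eag
    · exact not_monochromatic_triangle_of_lt_of_lt hsymm hord (hgb.trans hba) hgb hab ha hb
        ega egb eab

end Triangles

theorem stmt6_general (θ : Cardinal.{0})
    (lm : Ordinal.{0} → Cardinal.{0}) (δ : Ordinal.{0})
    (η : Ordinal.{0} → Ordinal.{0} → Ordinal.{0})
    (c : Ordinal.{0} → Ordinal.{0} → Ordinal.{0} → Fin 2)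
    (C : Ordinal.{0} → Ordinal.{0} → Ordinal.{0} × Fin 2)
    (hη_mem : ∀ α < δ, ∀ i < θ.ord, η α i < (lm i).ord)
    (hη_distinct : ∀ α β : Ordinal, α < δ → β < δ → α ≠ β → ∃ i < θ.ord, η α i ≠ η β i)
    (hc_sym : ∀ i a b : Ordinal, c i a b = c i b a)
    (hc_tri : ∀ i < θ.ord, ∀ a b g : Ordinal, a < b → b < g → g < (lm i).ord →
      ∀ ε : Fin 2, c i a b = ε → c i a g = ε → c i b g = ε → ε = 0)
    (hC : ∀ α β : Ordinal, α < β → β < δ →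
      C α β =
        if c (sInf {j | η α j ≠ η β j}) (η α (sInf {j | η α j ≠ η β j}))
            (η β (sInf {j | η α j ≠ η β j})) = 1
        then (sInf {j | η α j ≠ η β j}, 1) else (0, 0)) :
    ∀ i < θ.ord, ¬ ∃ α β γ : Ordinal, α < β ∧ β < γ ∧ γ < δ ∧
      C α β = (i, 1) ∧ C α γ = (i, 1) ∧ C β γ = (i, 1) := by
  rintro i hi ⟨α, β, γ, hαβ, hβγ, hγδ, hCαβ, hCαγ, hCβγ⟩
  have color_eq_one : ∀ α β, α < β → β < δ → C α β = (i, 1) →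
      η α i ≠ η β i ∧ c i (η α i) (η β i) = 1 := fun α β hαβ hβδ h => by
    obtain ⟨j, -, hj⟩ := hη_distinct α β (hαβ.trans hβδ) hβδ hαβ.ne
    exact ne_and_eq_one_of_ite_sInf_eq ⟨j, hj⟩ ((hC α β hαβ hβδ).symm.trans h)
  obtain ⟨hab, eab⟩ := color_eq_one α β hαβ (hβγ.trans hγδ) hCαβ
  obtain ⟨hag, eag⟩ := color_eq_one α γ (hαβ.trans hβγ) hγδ hCαγ
  obtain ⟨hbg, ebg⟩ := color_eq_one β γ hβγ hγδ hCβγ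
  exact not_monochromatic_triangle_of_not_ordered (hc_sym i)
    (fun a b g hab hbg hg eab eag ebg => one_ne_zero (hc_tri i hi a b g hab hbg hg 1 eab eag ebg))
    hab hag hbg (hη_mem α (hαβ.trans (hβγ.trans hγδ)) i hi) (hη_mem β (hβγ.trans hγδ) i hi)
    (hη_mem γ hγδ i hi) eab eag ebg

/-- Given pairwise distinct `(η_α : α < δ)` in `∏_{i<θ} λ_i` and colorings
`c_i : [λ_i]² → {0,1}` with no `1`-monochromatic triangle, the combined coloring
`C({α,β}) = (i, ε)` if `ε = c_i({η_α(i), η_β(i)}) > 0` (where `i` is least with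
`η_α(i) ≠ η_β(i)`) and `(0,0)` otherwise, has no triangle monochromatic in a color
`(i, 1)`. -/
theorem stmt6 (θ : Cardinal.{0}) (hθ : θ.IsRegular)
    (lm : Ordinal.{0} → Cardinal.{0}) (δ : Ordinal.{0})
    (η : Ordinal.{0} → Ordinal.{0} → Ordinal.{0})
    (c : Ordinal.{0} → Ordinal.{0} → Ordinal.{0} → Fin 2)
    (C : Ordinal.{0} → Ordinal.{0} → Ordinal.{0} × Fin 2)
    (hη_mem : ∀ α < δ, ∀ i < θ.ord, η α i < (lm i).ord)
    (hη_distinct : ∀ α β : Ordinal, α < δ → β < δ → α ≠ β → ∃ i < θ.ord, η α i ≠ η β i)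
    (hc_sym : ∀ i a b : Ordinal, c i a b = c i b a)
    (hc_tri : ∀ i < θ.ord, ∀ a b g : Ordinal, a < b → b < g → g < (lm i).ord →
      ∀ ε : Fin 2, c i a b = ε → c i a g = ε → c i b g = ε → ε = 0)
    (hC : ∀ α β : Ordinal, α < β → β < δ →
      C α β =
        if c (sInf {j | η α j ≠ η β j}) (η α (sInf {j | η α j ≠ η β j}))
            (η β (sInf {j | η α j ≠ η β j})) = 1
        then (sInf {j | η α j ≠ η β j}, 1) else (0, 0)) :
    ∀ i < θ.ord, ¬ ∃ α β γ : Ordinal, α < β ∧ β < γ ∧ γ < δ ∧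
      C α β = (i, 1) ∧ C α γ = (i, 1) ∧ C β γ = (i, 1) :=
  stmt6_general θ lm δ η c C hη_mem hη_distinct hc_sym hc_tri hC
end

section
/- Suppose λ is a cardinal with θ = cf(λ) < λ; λ = sup_{i<θ} κ_i = sup_{i<θ} λ_i with κ_i, λ_i regular, κ_i < λ_i, and ∏_{i<j} λ_i < κ_j for every j < θ. For each i < θ let 𝒟_i be a κ_i-complete proper filter over λ_i and c_i : [λ_i]² → {0,1} a coloring such that every A ⊆ λ_i on which c_i is constantly 0 satisfies λ_i \ A ∈ 𝒟_i. Let (η_α : α < λ⁺) be pairwise distinct functions in ∏_{i<θ} λ_i such that: whenever A_i ∈ 𝒟_i for every i < θ, there is α₀ < λ⁺ such that for every α with α₀ ≤ α < λ⁺ there is i_α < θ with η_α(i) ∈ A_i whenever i_α ≤ i < θ. Then for every A ⊆ λ⁺ of cardinality λ⁺ there exist distinct α, β ∈ A such that c_i({η_α(i), η_β(i)}) = 1, where i is the least j < θ with η_α(j) ≠ η_β(j). -/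
open Cardinal Ordinal Set

namespace Stmt7Aux

/-- the class of `α` at level `i`: members of `A` agreeing with `α` below `i`. -/
def cls (η : Ordinal.{0} → Ordinal.{0} → Ordinal.{0}) (A : Set Ordinal.{0})
    (i α : Ordinal.{0}) : Set Ordinal.{0} :=
  {β | β ∈ A ∧ ∀ j < i, η β j = η α j}

/-- the sub-class with value `ξ` at `i`. -/
def sub (η : Ordinal.{0} → Ordinal.{0} → Ordinal.{0}) (A : Set Ordinal.{0})
    (i α ξ : Ordinal.{0}) : Set Ordinal.{0} :=
  {β | β ∈ cls η A i α ∧ η β i = ξ}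

/-- the class of `α` at level `i` has full size `l⁺`. -/
def big (η : Ordinal.{0} → Ordinal.{0} → Ordinal.{0}) (A : Set Ordinal.{0})
    (l : Cardinal.{0}) (i α : Ordinal.{0}) : Prop :=
  Cardinal.lift.{1} (Order.succ l) ≤ #(cls η A i α)

/-- the big splitting values of the class of `α` at `i`. -/
def homset (η : Ordinal.{0} → Ordinal.{0} → Ordinal.{0}) (A : Set Ordinal.{0})
    (l : Cardinal.{0}) (i α : Ordinal.{0}) : Set Ordinal.{0} :=
  {ξ | Cardinal.lift.{1} (Order.succ l) ≤ #(sub η A i α ξ)}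

/-- union of big splitting values over all big classes at level `i`. -/
def U (η : Ordinal.{0} → Ordinal.{0} → Ordinal.{0}) (A : Set Ordinal.{0})
    (l : Cardinal.{0}) (i : Ordinal.{0}) : Set Ordinal.{0} :=
  {ξ | ∃ α ∈ A, big η A l i α ∧ ξ ∈ homset η A l i α}

theorem cls_congr {η : Ordinal.{0} → Ordinal.{0} → Ordinal.{0}} {A : Set Ordinal.{0}}
    {i α α' : Ordinal.{0}} (h : ∀ j < i, η α j = η α' j) :
    cls η A i α = cls η A i α' := by
  ext β
  constructor <;> rintro ⟨hβ, h2⟩ <;> refine ⟨hβ, fun j hj => ?_⟩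
  · rw [h2 j hj, h j hj]
  · rw [h2 j hj, h j hj]

theorem homset_congr {η : Ordinal.{0} → Ordinal.{0} → Ordinal.{0}} {A : Set Ordinal.{0}}
    {l : Cardinal.{0}} {i α α' : Ordinal.{0}} (h : ∀ j < i, η α j = η α' j) :
    homset η A l i α = homset η A l i α' := by
  unfold homset sub
  rw [cls_congr h]

/-- the nonemptiness extraction for sets of full size. -/
theorem homset_nonempty {η : Ordinal.{0} → Ordinal.{0} → Ordinal.{0}} {A : Set Ordinal.{0}}
    {l : Cardinal.{0}} {i α ξ : Ordinal.{0}} (h : ξ ∈ homset η A l i α) :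
    (sub η A i α ξ).Nonempty := by
  rw [← Set.nonempty_coe_sort, ← Cardinal.mk_ne_zero_iff]
  intro h0
  rw [homset, mem_setOf_eq, h0, nonpos_iff_eq_zero, Cardinal.lift_eq_zero] at h
  exact (Order.succ_ne_bot l) h

/-- counting restrictions: the realized restrictions below `i` of elements of `S`
are at most `∏_{j<i} λ_j` many. -/
theorem count (η : Ordinal.{0} → Ordinal.{0} → Ordinal.{0}) (lm : Ordinal.{0} → Cardinal.{0})
    (i : Ordinal.{0}) (S : Set Ordinal.{0})
    (hbd : ∀ α ∈ S, ∀ j < i, η α j < (lm j).ord) :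
    #((fun α (j : Set.Iio i) => η α j.val) '' S)
      ≤ Cardinal.prod (fun j : Set.Iio i => lm j.val) := by
  have hmemb : ∀ g : ↥((fun α (j : Set.Iio i) => η α j.val) '' S), ∀ j : Set.Iio i,
      g.val j < (lm j.val).ord := by
    rintro ⟨g, α, hα, rfl⟩ j
    exact hbd α hα j.val j.2
  have key : #((fun α (j : Set.Iio i) => η α j.val) '' S)
      ≤ #(Π j : Set.Iio i, Set.Iio (lm j.val).ord) := by
    refine mk_le_of_injective (f := fun g j => ⟨g.val j, hmemb g j⟩) ?_
    intro g g' hgg'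
    ext j
    exact congrArg Subtype.val (congrFun hgg' j)
  calc #((fun α (j : Set.Iio i) => η α j.val) '' S)
      ≤ #(Π j : Set.Iio i, Set.Iio (lm j.val).ord) := key
    _ = Cardinal.prod (fun j : Set.Iio i => #(Set.Iio (lm j.val).ord)) := mk_pi _
    _ = Cardinal.prod (fun j : Set.Iio i => Cardinal.lift.{1} (lm j.val)) := by
        simp [Cardinal.mk_Iio_ordinal, card_ord]
    _ = Cardinal.lift.{1} (Cardinal.prod (fun j : Set.Iio i => lm j.val)) :=
        (lift_prod _).symm
    _ = Cardinal.prod (fun j : Set.Iio i => lm j.val) := Cardinal.lift_id _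

end Stmt7Aux

open Stmt7Aux in
/-- In the setting of Theorem 3.2: every `A ⊆ λ⁺` of cardinality `λ⁺` contains distinct
`α, β` with `c_i({η_α(i), η_β(i)}) = 1`, where `i` is least with `η_α(i) ≠ η_β(i)`. -/
theorem stmt7 (l θ : Cardinal.{0}) (κm lm : Ordinal.{0} → Cardinal.{0})
    (D : Ordinal.{0} → Set (Set Ordinal.{0}))
    (c : Ordinal.{0} → Ordinal.{0} → Ordinal.{0} → Fin 2)
    (η : Ordinal.{0} → Ordinal.{0} → Ordinal.{0})
    (hA1 : θ = l.ord.cof) (hA1' : θ < l)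
    (hA2κ : l = ⨆ i : Set.Iio θ.ord, κm i.val)
    (hA2l : l = ⨆ i : Set.Iio θ.ord, lm i.val)
    (hA3 : ∀ i < θ.ord, (κm i).IsRegular ∧ (lm i).IsRegular ∧ κm i < lm i)
    (hA4 : ∀ j < θ.ord,
      Cardinal.prod (fun i : Set.Iio j => lm i.val) < Cardinal.lift.{1} (κm j))
    (hD : ∀ i < θ.ord, IsFilterOn (D i) (lm i).ord ∧ IsKappaComplete (D i) (κm i) ∧
      ∅ ∉ D i)
    (hc_sym : ∀ i a b : Ordinal, c i a b = c i b a)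
    (hc : ∀ i < θ.ord, ∀ A : Set Ordinal.{0}, A ⊆ Set.Iio (lm i).ord →
      (∀ a ∈ A, ∀ b ∈ A, a < b → c i a b = 0) → (Set.Iio (lm i).ord \ A) ∈ D i)
    (hη_mem : ∀ α < (Order.succ l).ord, ∀ i < θ.ord, η α i < (lm i).ord)
    (hη_distinct : ∀ α β : Ordinal, α < (Order.succ l).ord → β < (Order.succ l).ord →
      α ≠ β → ∃ i < θ.ord, η α i ≠ η β i)
    (hη_catch : ∀ A : Ordinal.{0} → Set Ordinal.{0}, (∀ i < θ.ord, A i ∈ D i) →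
      ∃ α₀ < (Order.succ l).ord, ∀ α, α₀ ≤ α → α < (Order.succ l).ord →
        ∃ iα < θ.ord, ∀ i, iα ≤ i → i < θ.ord → η α i ∈ A i) :
    ∀ A : Set Ordinal.{0}, A ⊆ Set.Iio (Order.succ l).ord →
      #A = Cardinal.lift.{1} (Order.succ l) →
      ∃ α ∈ A, ∃ β ∈ A, α ≠ β ∧
        c (sInf {j | η α j ≠ η β j}) (η α (sInf {j | η α j ≠ η β j}))
          (η β (sInf {j | η α j ≠ η β j})) = 1 := by
  classical
  intro A hAsub hAcard
  by_contra hcon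
  push_neg at hcon
  -- basic cardinal facts
  have hθpos : 0 < θ.ord := by
    by_contra h
    push_neg at h
    have h0 : θ.ord = 0 := le_antisymm h zero_le
    have hemp : IsEmpty (Set.Iio θ.ord) := by
      rw [h0]
      exact ⟨fun x => (not_lt_zero (Set.mem_Iio.1 x.2))⟩
    rw [ciSup_of_empty] at hA2l
    rw [hA2l] at hA1'
    exact (Cardinal.zero_le θ).not_gt hA1'
  have hl_inf : ℵ₀ ≤ l := by
    have h0 := hA3 0 hθpos
    have : lm 0 ≤ l := by
      rw [hA2l]
      exact le_ciSup (Cardinal.bddAbove_range _) (⟨0, hθpos⟩ : Set.Iio θ.ord)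
    exact h0.2.1.aleph0_le.trans this
  have hθ_inf : ℵ₀ ≤ θ := by
    rw [hA1]
    exact Ordinal.aleph0_le_cof.2 (Cardinal.isSuccLimit_ord hl_inf)
  have hθord_lim : Order.IsSuccLimit θ.ord := Cardinal.isSuccLimit_ord hθ_inf
  have hκ_le_l : ∀ i < θ.ord, κm i ≤ l := by
    intro i hi
    rw [hA2κ]
    exact le_ciSup (Cardinal.bddAbove_range _) (⟨i, hi⟩ : Set.Iio θ.ord)
  have hlinf1 : ℵ₀ ≤ Cardinal.lift.{1} l := by rwa [Cardinal.aleph0_le_lift]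
  have hbd : ∀ α ∈ A, ∀ j < θ.ord, η α j < (lm j).ord :=
    fun α hα j hj => hη_mem α (hAsub hα) j hj
  -- the homogeneous-set lemma
  have hhomD : ∀ i < θ.ord, ∀ α ∈ A, Set.Iio (lm i).ord \ homset η A l i α ∈ D i := by
    intro i hi α hα
    apply hc i hi
    · -- homset ⊆ Iio λ_i
      intro ξ hξ
      obtain ⟨β, hβcls, hβξ⟩ := homset_nonempty hξ
      rw [Set.mem_Iio, ← hβξ]
      exact hbd β hβcls.1 i hi
    · -- 0-homogeneous
      intro a ha b hb hab
      obtain ⟨β, hβcls, hβa⟩ := homset_nonempty ha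
      obtain ⟨γ, hγcls, hγb⟩ := homset_nonempty hb
      have hβγ : β ≠ γ := by
        intro h
        rw [h, hγb] at hβa
        exact hab.ne' hβa
      have hiS : i ∈ {j | η β j ≠ η γ j} := by
        simp only [mem_setOf_eq, hβa, hγb]
        exact hab.ne
      have hsinf : sInf {j | η β j ≠ η γ j} = i := by
        refine le_antisymm (csInf_le' hiS) (le_csInf ⟨i, hiS⟩ ?_)
        intro j hj
        by_contra hji
        push_neg at hji
        exact hj (by rw [hβcls.2 j hji, hγcls.2 j hji])
      have := hcon β hβcls.1 γ hγcls.1 hβγ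
      rw [hsinf, hβa, hγb] at this
      have hfin : ∀ x : Fin 2, x ≠ 1 → x = 0 := by decide
      exact hfin _ this
  -- the filter sets
  have hF : ∀ i < θ.ord, Set.Iio (lm i).ord \ U η A l i ∈ D i := by
    intro i hi
    by_cases hbigex : ∃ α ∈ A, big η A l i α
    · set ρ : Ordinal.{0} → (Set.Iio i → Ordinal.{0}) := fun α (j : Set.Iio i) => η α j.val
        with hρdef
      set T : Set (Set.Iio i → Ordinal.{0}) := ρ '' {α | α ∈ A ∧ big η A l i α} with hT
      have hTcard : #T < Cardinal.lift.{1} (κm i) := by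
        refine lt_of_le_of_lt ?_ (hA4 i hi)
        exact count η lm i _ (fun α hα j hj => hbd α hα.1 j (hj.trans hi))
      obtain ⟨μ, hμ⟩ := Cardinal.mem_range_lift_of_le hTcard.le
      have hμκ : μ < κm i := by
        rw [← Cardinal.lift_lt.{0,1}, hμ]
        exact hTcard
      have hTne : T.Nonempty := by
        obtain ⟨α, hαA, hαbig⟩ := hbigex
        exact ⟨ρ α, α, ⟨hαA, hαbig⟩, rfl⟩
      have hμne : μ ≠ 0 := by
        intro h0
        rw [h0, Cardinal.lift_zero] at hμ
        rw [← Set.nonempty_coe_sort, ← Cardinal.mk_ne_zero_iff] at hTne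
        exact hTne hμ.symm
      set ζ : Ordinal.{0} := μ.ord with hζ
      have hζpos : 0 < ζ := by
        rw [hζ, pos_iff_ne_zero]
        intro h0
        exact hμne (by rwa [Cardinal.ord_eq_zero] at h0)
      have hcards : #(Set.Iio ζ) = #T := by
        rw [Cardinal.mk_Iio_ordinal, hζ, card_ord, hμ]
      have e : ↥(Set.Iio ζ) ≃ ↥T := Classical.choice (Cardinal.eq.1 hcards)
      -- pick representatives
      have hrep : ∀ t : ↥T, ∃ α, (α ∈ A ∧ big η A l i α) ∧ ρ α = t.val := fun t => t.2
      choose rep hrepm hrepρ using hrep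
      set G : Ordinal.{0} → Set Ordinal.{0} := fun k =>
        if h : k < ζ then Set.Iio (lm i).ord \ homset η A l i (rep (e ⟨k, h⟩)) else Set.univ
        with hG
      have hGD : ∀ k < ζ, G k ∈ D i := by
        intro k hk
        rw [hG]
        simp only [hk, dif_pos]
        exact hhomD i hi _ (hrepm _).1
      have hint : (⋂ k ∈ Set.Iio ζ, G k) ∈ D i := by
        refine (hD i hi).2.1 ζ G hζpos ?_ hGD
        rw [hζ, card_ord]
        exact hμκ
      refine (hD i hi).1.2.2.1 _ hint _ Set.diff_subset ?_
      intro ξ hξ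
      rw [Set.mem_iInter₂] at hξ
      have hξ0 := hξ 0 hζpos
      rw [hG] at hξ0
      simp only [hζpos, dif_pos] at hξ0
      refine ⟨hξ0.1, ?_⟩
      rintro ⟨α, hαA, hαbig, hαhom⟩
      have htmem : ρ α ∈ T := ⟨α, ⟨hαA, hαbig⟩, rfl⟩
      set t : ↥T := ⟨ρ α, htmem⟩ with ht
      have hk : (e.symm t).val < ζ := (e.symm t).2
      have hξk := hξ (e.symm t).val hk
      rw [hG] at hξk
      simp only [dif_pos hk, Subtype.coe_eta, Equiv.apply_symm_apply] at hξk
      rw [show (⟨(e.symm t).val, hk⟩ : Set.Iio ζ) = e.symm t from rfl, Equiv.apply_symm_apply] at hξk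
      apply hξk.2
      have hρeq : ρ (rep t) = ρ α := hrepρ t
      have : ∀ j < i, η (rep t) j = η α j := by
        intro j hj
        exact congrFun hρeq ⟨j, hj⟩
      rw [homset_congr this]
      exact hαhom
    · have hUemp : U η A l i = ∅ := by
        ext ξ
        simp only [U, mem_setOf_eq, Set.mem_empty_iff_false, iff_false]
        rintro ⟨α, hαA, hαbig, _⟩
        exact hbigex ⟨α, hαA, hαbig⟩
      rw [hUemp, Set.diff_empty]
      exact (hD i hi).1.2.1
  -- counting the bad set
  have hbadcount : ∀ i < θ.ord,
      #{α | α ∈ A ∧ ¬ big η A l i α} ≤ Cardinal.lift.{1} l := by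
    intro i hi
    set ρ : Ordinal.{0} → (Set.Iio i → Ordinal.{0}) := fun α (j : Set.Iio i) => η α j.val
      with hρdef
    set T : Set (Set.Iio i → Ordinal.{0}) := ρ '' A with hT
    set Bd : Set Ordinal.{0} := {α | α ∈ A ∧ ¬ big η A l i α} with hBd
    have hsub : Bd ⊆ ⋃ t : ↥T, {α | α ∈ Bd ∧ ρ α = t.val} := by
      intro α hα
      exact Set.mem_iUnion.2 ⟨⟨ρ α, α, hα.1, rfl⟩, hα, rfl⟩
    have hTl : #T ≤ Cardinal.lift.{1} l := by
      refine le_trans (count η lm i _ (fun α hα j hj => hbd α hα j (hj.trans hi))) ?_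
      refine le_trans (hA4 i hi).le ?_
      rw [Cardinal.lift_le]
      exact hκ_le_l i hi
    have hfib : ∀ t : ↥T, #{α | α ∈ Bd ∧ ρ α = t.val} ≤ Cardinal.lift.{1} l := by
      intro t
      by_cases hne : {α | α ∈ Bd ∧ ρ α = t.val}.Nonempty
      · obtain ⟨α, hαBd, hαρ⟩ := hne
        have hsubcls : {α' | α' ∈ Bd ∧ ρ α' = t.val} ⊆ cls η A i α := by
          rintro β ⟨hβBd, hβρ⟩
          refine ⟨hβBd.1, fun j hj => ?_⟩
          have : ρ β = ρ α := by rw [hβρ, hαρ]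
          exact congrFun this ⟨j, hj⟩
        refine le_trans (Cardinal.mk_le_mk_of_subset hsubcls) ?_
        have := hαBd.2
        simp only [big, not_le] at this
        rwa [Cardinal.lift_succ, Order.lt_succ_iff] at this
      · rw [Set.not_nonempty_iff_eq_empty] at hne
        rw [hne]
        simp
    calc #Bd ≤ #(⋃ t : ↥T, {α | α ∈ Bd ∧ ρ α = t.val}) := Cardinal.mk_le_mk_of_subset hsub
      _ ≤ #(↥T) * ⨆ t : ↥T, #{α | α ∈ Bd ∧ ρ α = t.val} := Cardinal.mk_iUnion_le _
      _ ≤ Cardinal.lift.{1} l * Cardinal.lift.{1} l :=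
          mul_le_mul' hTl (ciSup_le' hfib)
      _ = Cardinal.lift.{1} l := Cardinal.mul_eq_self hlinf1
  -- apply the catching property
  obtain ⟨α₀, hα₀L, hcatch⟩ := hη_catch (fun i => Set.Iio (lm i).ord \ U η A l i) hF
  -- find a good α
  have hgood : ∃ α ∈ A, α₀ ≤ α ∧ ∀ i < θ.ord, big η A l i α := by
    by_contra h
    push_neg at h
    have hsub : A ⊆ Set.Iio α₀ ∪
        ⋃ i : ↥(Set.Iio θ.ord), {α | α ∈ A ∧ ¬ big η A l i.val α} := by
      intro α hα
      by_cases hle : α₀ ≤ α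
      · obtain ⟨i, hi, hnb⟩ := h α hα hle
        exact Or.inr (Set.mem_iUnion.2 ⟨⟨i, hi⟩, hα, hnb⟩)
      · exact Or.inl (lt_of_not_ge hle)
    have hcard1 : #(Set.Iio α₀) ≤ Cardinal.lift.{1} l := by
      rw [Cardinal.mk_Iio_ordinal, Cardinal.lift_le]
      have := Cardinal.lt_ord.1 hα₀L
      rwa [Order.lt_succ_iff] at this
    have hcard2 : #(⋃ i : ↥(Set.Iio θ.ord), {α | α ∈ A ∧ ¬ big η A l i.val α})
        ≤ Cardinal.lift.{1} l := by
      refine le_trans (Cardinal.mk_iUnion_le _) ?_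
      have hι : #(↥(Set.Iio θ.ord)) ≤ Cardinal.lift.{1} l := by
        rw [Cardinal.mk_Iio_ordinal, card_ord, Cardinal.lift_le]
        exact hA1'.le
      refine le_trans (mul_le_mul' hι (ciSup_le' fun i => hbadcount i.val i.2)) ?_
      rw [Cardinal.mul_eq_self hlinf1]
    have : #A ≤ Cardinal.lift.{1} l := by
      refine le_trans (Cardinal.mk_le_mk_of_subset hsub) ?_
      refine le_trans (Cardinal.mk_union_le _ _) ?_
      exact le_trans (add_le_add hcard1 hcard2) (Cardinal.add_eq_self hlinf1).le
    rw [hAcard, Cardinal.lift_le] at this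
    exact (Order.lt_succ l).not_ge this
  obtain ⟨α, hαA, hα₀le, hbigα⟩ := hgood
  obtain ⟨iα, hiαθ, hmem⟩ := hcatch α hα₀le (hAsub hαA)
  have h1 : η α iα ∈ Set.Iio (lm iα).ord \ U η A l iα := hmem iα le_rfl hiαθ
  have hsucclt : Order.succ iα < θ.ord := hθord_lim.succ_lt hiαθ
  apply h1.2
  refine ⟨α, hαA, hbigα iα hiαθ, ?_⟩
  refine le_trans (hbigα (Order.succ iα) hsucclt) (Cardinal.mk_le_mk_of_subset ?_)
  rintro β ⟨hβA, hβeq⟩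
  exact ⟨⟨hβA, fun j hj => hβeq j (hj.trans (Order.lt_succ iα))⟩,
    hβeq iα (Order.lt_succ iα)⟩
end

section
/- Let κ be an infinite regular cardinal. Suppose E = ⋃_{α<κ} E_α with |E_α| > κ for every α < κ. Assume f : E → 𝒫(E) is a set mapping (x ∉ f(x) for all x ∈ E) such that |f(x) ∩ E_α| < κ for every x ∈ E and every α < κ. Then there exists a set X ⊆ E that is free for f (i.e., f(y) ∩ X = ∅ for every y ∈ X) and satisfies X ∩ E_α ≠ ∅ for every α < κ. -/
open Cardinal Ordinal Set

universe u

namespace HMFree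

attribute [local instance] Classical.propDecidable

/-- index ordinal of a stage `t : κ.ord.ToType` -/
noncomputable def idx (κ : Cardinal.{u}) (t : κ.ord.ToType) : Ordinal.{u} :=
  @Ordinal.typein κ.ord.ToType (· < ·) isWellOrder_lt t

theorem idx_lt (κ : Cardinal.{u}) (t : κ.ord.ToType) : idx κ t < κ.ord := typein_lt_self t

theorem idx_card_lt (κ : Cardinal.{u}) (t : κ.ord.ToType) : (idx κ t).card < κ :=
  card_typein_toType_lt κ t

theorem idx_card_eq (κ : Cardinal.{u}) (t : κ.ord.ToType) : (idx κ t).card = #{y // y < t} :=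
  @card_typein κ.ord.ToType (· < ·) isWellOrder_lt t

theorem idx_surj (κ : Cardinal.{u}) {o : Ordinal.{u}} (h : o < κ.ord) :
    ∃ t : κ.ord.ToType, idx κ t = o := by
  have := @typein_surj κ.ord.ToType (· < ·) isWellOrder_lt o (by rw [type_toType]; exact h)
  obtain ⟨t, ht⟩ := this
  exact ⟨t, ht⟩

/-- pairs (stage, play) -/
abbrev SP (κ : Cardinal.{u}) : Type u := κ.ord.ToType × (Order.succ κ).ord.ToType

/-- stage-major lexicographic order on pairs -/
def rel (κ : Cardinal.{u}) : SP κ → SP κ → Prop := Prod.Lex (· < ·) (· < ·)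

theorem rel_wf (κ : Cardinal.{u}) : WellFounded (rel κ) :=
  WellFounded.prod_lex wellFounded_lt wellFounded_lt

variable {α : Type u} (κ : Cardinal.{u}) (f : α → Set α) (Y : κ.ord.ToType → Set α) (a₀ : α)

/-- the candidate set at pair `p`, given previous choices `g` -/
def Cand (g : SP κ → α) (p : SP κ) : Set α :=
  {a | a ∈ Y p.1 ∧ ∀ q : SP κ, rel κ q p →
      ((q.2 = p.2 → a ∉ f (g q) ∧ g q ∉ f a) ∧ (q.1 = p.1 → a ≠ g q))}

theorem Cand_congr {g g' : SP κ → α} {p : SP κ} (h : ∀ q, rel κ q p → g q = g' q) :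
    Cand κ f Y g p = Cand κ f Y g' p := by
  ext a
  constructor <;> rintro ⟨h1, h2⟩ <;> refine ⟨h1, fun q hq => ?_⟩
  · rw [← h q hq]; exact h2 q hq
  · rw [h q hq]; exact h2 q hq

/-- the transfinite choice function -/
noncomputable def pick : SP κ → α :=
  (rel_wf κ).fix (fun p IH =>
    if h : (Cand κ f Y (fun q => if hq : rel κ q p then IH q hq else a₀) p).Nonempty
    then h.choose else a₀)

theorem pick_mem {p : SP κ} (h : (Cand κ f Y (pick κ f Y a₀) p).Nonempty) :
    pick κ f Y a₀ p ∈ Cand κ f Y (pick κ f Y a₀) p := by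
  have key : Cand κ f Y (fun q => if hq : rel κ q p then pick κ f Y a₀ q else a₀) p
      = Cand κ f Y (pick κ f Y a₀) p :=
    Cand_congr κ f Y (fun q hq => dif_pos hq)
  have h' : (Cand κ f Y (fun q => if hq : rel κ q p then pick κ f Y a₀ q else a₀) p).Nonempty :=
    key ▸ h
  have h0 : pick κ f Y a₀ p =
      if h : (Cand κ f Y (fun q => if hq : rel κ q p then pick κ f Y a₀ q else a₀) p).Nonempty
      then h.choose else a₀ :=
    (rel_wf κ).fix_eq _ p
  rw [h0, dif_pos h']
  exact key ▸ h'.choose_spec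

/-- exceptional (non-backward-killed) set at the critical stage -/
def Exc (x : SP κ → α) (tstar : κ.ord.ToType) (ζ : (Order.succ κ).ord.ToType) : Set α :=
  (⋃ γ : {γ : κ.ord.ToType // γ < tstar}, (f (x (γ.1, ζ)) ∩ Y tstar)) ∪
  (Set.range fun η : {η : (Order.succ κ).ord.ToType // η < ζ} => x (tstar, η.1))

end HMFree

namespace HMFree2

theorem sum_lt_reg {κ : Cardinal.{u}} (hκ : κ.IsRegular) {ι : Type u} (hι : #ι < κ)
    (g : ι → Cardinal.{u}) (h : ∀ i, g i < κ) : Cardinal.sum g < κ :=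
  lt_of_le_of_lt (sum_le_mk_mul_iSup g)
    (mul_lt_of_lt hκ.aleph0_le hι (Ordinal.iSup_lt (by rw [hκ.cof_eq]; exact hι) h))

theorem mk_iUnion_lt_reg {κ : Cardinal.{u}} (hκ : κ.IsRegular) {γ ι : Type u} (hι : #ι < κ)
    (s : ι → Set γ) (h : ∀ i, #(s i) < κ) : #(⋃ i, s i) < κ :=
  lt_of_le_of_lt mk_iUnion_le_sum_mk (sum_lt_reg hκ hι _ h)

theorem mk_iUnion_le_kappa {κ : Cardinal.{u}} (hκ : ℵ₀ ≤ κ) {γ ι : Type u} (hι : #ι ≤ κ)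
    (s : ι → Set γ) (h : ∀ i, #(s i) ≤ κ) : #(⋃ i, s i) ≤ κ := by
  calc #(⋃ i, s i) ≤ #ι * ⨆ i, #(s i) := mk_iUnion_le s
    _ ≤ κ * κ := mul_le_mul' hι (ciSup_le' h)
    _ = κ := mul_eq_self hκ

theorem exists_big_fiber {κ : Cardinal.{u}} (hκ : ℵ₀ ≤ κ) {A B : Type u}
    (hA : #A = Order.succ κ) (hB : #B = κ) (F : A → B) :
    ∃ b : B, κ < #{a : A // F a = b} := by
  by_contra hcon
  push_neg at hcon
  have h1 : #A = Cardinal.sum (fun b : B => #{a : A // F a = b}) := by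
    rw [← mk_sigma]
    exact (Cardinal.mk_congr (Equiv.sigmaFiberEquiv F)).symm
  have h2 : Cardinal.sum (fun b : B => #{a : A // F a = b}) ≤
      Cardinal.sum (fun _ : B => κ) := Cardinal.sum_le_sum _ _ hcon
  rw [Cardinal.sum_const'] at h2
  rw [hB, mul_eq_self hκ] at h2
  rw [hA] at h1
  have := h1 ▸ h2
  exact absurd this (not_le.mpr (Order.lt_succ κ))

end HMFree2

/-- Hajnal–Máté free set lemma: if `E = ⋃_{α<κ} E_α` with each `|E_α| > κ`, and
`f` is a set mapping on `E` with `|f(x) ∩ E_α| < κ` for all `x ∈ E` and `α < κ`,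
then there is a free set `X` for `f` meeting every `E_α`. -/
theorem stmt8 {α : Type u} (κ : Cardinal.{u}) (hκ : κ.IsRegular)
    (E : Set α) (Eind : Ordinal.{u} → Set α)
    (hE : E = ⋃ i ∈ Set.Iio κ.ord, Eind i)
    (hbig : ∀ i < κ.ord, κ < #(Eind i))
    (f : α → Set α)
    (hfE : ∀ x ∈ E, f x ⊆ E)
    (hsetmap : ∀ x ∈ E, x ∉ f x)
    (hsmall : ∀ x ∈ E, ∀ i < κ.ord, #(↥(f x ∩ Eind i)) < κ) :
    ∃ X ⊆ E, (∀ y ∈ X, f y ∩ X = ∅) ∧ ∀ i < κ.ord, (X ∩ Eind i).Nonempty := by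
  classical
  have hℵ : ℵ₀ ≤ κ := hκ.aleph0_le
  have hEsub : ∀ i < κ.ord, Eind i ⊆ E := by
    intro i hi
    rw [hE]
    exact subset_biUnion_of_mem hi
  -- choose pools of size κ⁺ inside each level
  have hYex : ∀ t : κ.ord.ToType, ∃ Yt : Set α,
      Yt ⊆ Eind (HMFree.idx κ t) ∧ #Yt = Order.succ κ := by
    intro t
    have h1 : Order.succ κ ≤ #(Eind (HMFree.idx κ t)) :=
      Order.succ_le_of_lt (hbig _ (HMFree.idx_lt κ t))
    obtain ⟨p, hp1, hp2⟩ := le_mk_iff_exists_subset.mp h1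
    exact ⟨p, hp1, hp2⟩
  choose Y hYsub hYcard using hYex
  have hYE : ∀ t, Y t ⊆ E := fun t => (hYsub t).trans (hEsub _ (HMFree.idx_lt κ t))
  -- a default point
  have hTne : Nonempty κ.ord.ToType := toType_nonempty_iff_ne_zero.mpr hκ.ord_pos.ne'
  obtain ⟨t₀⟩ := hTne
  have hY0 : (Y t₀).Nonempty := by
    rw [← nonempty_coe_sort, ← mk_ne_zero_iff, hYcard]
    exact (lt_of_le_of_lt (zero_le (a := κ)) (Order.lt_succ κ)).ne'
  obtain ⟨a₀, _⟩ := hY0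
  set x : HMFree.SP κ → α := HMFree.pick κ f Y a₀ with hx
  have hCand_mem : ∀ p : HMFree.SP κ, (HMFree.Cand κ f Y x p).Nonempty →
      x p ∈ HMFree.Cand κ f Y x p := by
    intro p h
    rw [hx]
    exact HMFree.pick_mem κ f Y a₀ (by rw [← hx]; exact h)
  have hfact : ∀ (β : κ.ord.ToType) (ζ : (Order.succ κ).ord.ToType),
      (HMFree.Cand κ f Y x (β, ζ)).Nonempty →
      x (β, ζ) ∈ Y β ∧
      (∀ γ, γ < β → x (β, ζ) ∉ f (x (γ, ζ)) ∧ x (γ, ζ) ∉ f (x (β, ζ))) ∧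
      (∀ η, η < ζ → x (β, ζ) ≠ x (β, η)) := by
    intro β ζ h
    obtain ⟨h1, h2⟩ := hCand_mem _ h
    refine ⟨h1, fun γ hγ => ?_, fun η hη => ?_⟩
    · exact (h2 (γ, ζ) (Prod.Lex.left _ _ hγ)).1 rfl
    · exact (h2 (β, η) (Prod.Lex.right _ hη)).2 rfl
  by_cases hGood : ∃ ζ : (Order.succ κ).ord.ToType, ∀ β : κ.ord.ToType,
      (HMFree.Cand κ f Y x (β, ζ)).Nonempty
  · -- a play that never dies gives the free set
    obtain ⟨ζ, hζ⟩ := hGood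
    refine ⟨Set.range (fun β : κ.ord.ToType => x (β, ζ)), ?_, ?_, ?_⟩
    · rintro _ ⟨β, rfl⟩
      exact hYE β ((hfact β ζ (hζ β)).1)
    · rintro _ ⟨β, rfl⟩
      rw [Set.eq_empty_iff_forall_notMem]
      rintro z ⟨hz1, hz2⟩
      obtain ⟨γ, rfl⟩ := hz2
      rcases lt_trichotomy γ β with hc | hc | hc
      · exact ((hfact β ζ (hζ β)).2.1 γ hc).2 hz1
      · subst hc
        exact hsetmap _ (hYE γ ((hfact γ ζ (hζ γ)).1)) hz1
      · exact ((hfact γ ζ (hζ γ)).2.1 β hc).1 hz1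
    · intro i hi
      obtain ⟨β, hβ⟩ := HMFree.idx_surj κ hi
      refine ⟨x (β, ζ), ⟨β, rfl⟩, ?_⟩
      rw [← hβ]
      exact hYsub β ((hfact β ζ (hζ β)).1)
  · -- otherwise all κ⁺ plays die; derive a contradiction
    exfalso
    push_neg at hGood
    have hex : ∀ ζ : (Order.succ κ).ord.ToType, ∃ β : κ.ord.ToType,
        ¬(HMFree.Cand κ f Y x (β, ζ)).Nonempty ∧
        ∀ γ, γ < β → (HMFree.Cand κ f Y x (γ, ζ)).Nonempty := by
      intro ζ
      obtain ⟨β0, hβ0⟩ := hGood ζ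
      have hne : {β : κ.ord.ToType | ¬(HMFree.Cand κ f Y x (β, ζ)).Nonempty}.Nonempty :=
        ⟨β0, fun hne => Set.not_nonempty_empty (hβ0 ▸ hne)⟩
      refine ⟨wellFounded_lt.min _ hne, wellFounded_lt.min_mem _ hne, ?_⟩
      intro γ hγ
      by_contra hcon
      exact wellFounded_lt.not_lt_min _ hcon hγ
    choose fail hfail_empty halive using hex
    have hmkP : #((Order.succ κ).ord.ToType) = Order.succ κ := by rw [mk_toType, card_ord]
    have hmkT : #(κ.ord.ToType) = κ := by rw [mk_toType, card_ord]
    obtain ⟨tstar, htstar⟩ := HMFree2.exists_big_fiber hℵ hmkP hmkT fail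
    have hF : κ ≤ #({ζ : (Order.succ κ).ord.ToType | fail ζ = tstar}) := le_of_lt htstar
    obtain ⟨F, hFsub, hFcard⟩ := le_mk_iff_exists_subset.mp hF
    have hFfail : ∀ ζ ∈ F, fail ζ = tstar := fun ζ h => hFsub h
    have halive' : ∀ ζ ∈ F, ∀ γ : κ.ord.ToType, γ < tstar →
        (HMFree.Cand κ f Y x (γ, ζ)).Nonempty := by
      intro ζ hζ γ hγ
      exact halive ζ γ (by rw [hFfail ζ hζ]; exact hγ)
    -- the exceptional sets have size at most κ
    have hExc_le : ∀ ζ ∈ F, #(HMFree.Exc κ f Y x tstar ζ) ≤ κ := by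
      intro ζ hζF
      refine le_trans (mk_union_le _ _) ?_
      have h1 : #(⋃ γ : {γ : κ.ord.ToType // γ < tstar}, (f (x (γ.1, ζ)) ∩ Y tstar)) ≤ κ := by
        refine le_of_lt (HMFree2.mk_iUnion_lt_reg hκ ?_ _ ?_)
        · rw [← HMFree.idx_card_eq κ tstar]
          exact HMFree.idx_card_lt κ tstar
        · intro γ
          have hx_mem := hCand_mem (γ.1, ζ) (halive' ζ hζF γ.1 γ.2)
          have hxmemE : x (γ.1, ζ) ∈ E := hYE _ hx_mem.1
          calc #(↥(f (x (γ.1, ζ)) ∩ Y tstar))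
              ≤ #(↥(f (x (γ.1, ζ)) ∩ Eind (HMFree.idx κ tstar))) :=
                mk_le_mk_of_subset (inter_subset_inter_right _ (hYsub tstar))
            _ < κ := hsmall _ hxmemE _ (HMFree.idx_lt κ tstar)
      have h2 : #(Set.range fun η : {η : (Order.succ κ).ord.ToType // η < ζ} =>
          x (tstar, η.1)) ≤ κ := by
        refine le_trans mk_range_le ?_
        rw [← HMFree.idx_card_eq (Order.succ κ) ζ]
        exact Order.lt_succ_iff.mp (HMFree.idx_card_lt (Order.succ κ) ζ)
      calc _ ≤ κ + κ := add_le_add h1 h2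
        _ = κ := add_eq_self hℵ
    -- find a victim y surviving all exceptional sets
    have hUnion_le : #(⋃ ζ : ↥F, HMFree.Exc κ f Y x tstar ζ.1) ≤ κ :=
      HMFree2.mk_iUnion_le_kappa hℵ (le_of_eq hFcard) _ (fun ζ => hExc_le ζ.1 ζ.2)
    have hnotsub : ¬ (Y tstar ⊆ ⋃ ζ : ↥F, HMFree.Exc κ f Y x tstar ζ.1) := by
      intro hsub
      have hle : #(Y tstar) ≤ κ := le_trans (mk_le_mk_of_subset hsub) hUnion_le
      rw [hYcard tstar] at hle
      exact absurd hle (not_le.mpr (Order.lt_succ κ))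
    obtain ⟨y, hyY, hyU⟩ := Set.not_subset.mp hnotsub
    have hyInE : y ∈ E := hYE tstar hyY
    have hynotExc : ∀ ζ ∈ F, y ∉ HMFree.Exc κ f Y x tstar ζ := by
      intro ζ hζ hcon
      exact hyU (Set.mem_iUnion.mpr ⟨⟨ζ, hζ⟩, hcon⟩)
    -- every play in F kills y backward
    have hkill : ∀ ζ ∈ F, ∃ γ : κ.ord.ToType, γ < tstar ∧ x (γ, ζ) ∈ f y := by
      intro ζ hζF
      by_contra hno
      push_neg at hno
      have hfe := hfail_empty ζ
      rw [hFfail ζ hζF] at hfe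
      apply hfe
      refine ⟨y, hyY, ?_⟩
      rintro ⟨q1, q2⟩ hq
      have hq' : q1 < tstar ∨ (q1 = tstar ∧ q2 < ζ) := Prod.lex_def.mp hq
      constructor
      · intro h2
        have h2' : q2 = ζ := h2
        rcases hq' with h | ⟨hh1, hh2⟩
        · constructor
          · intro hmem
            rw [h2'] at hmem
            exact hynotExc ζ hζF
              (Set.mem_union_left _ (Set.mem_iUnion.mpr ⟨⟨q1, h⟩, ⟨hmem, hyY⟩⟩))
          · rw [h2']
            exact hno q1 h
        · exact absurd h2' (ne_of_lt hh2)
      · intro h1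
        have h1' : q1 = tstar := h1
        rcases hq' with h | ⟨hh1, hh2⟩
        · exact absurd h1' (ne_of_lt h)
        · rw [h1']
          intro heq
          exact hynotExc ζ hζF (Set.mem_union_right _ ⟨⟨q2, hh2⟩, heq.symm⟩)
    -- build an injection from F into the trace of y below tstar
    have hkill' : ∀ ζ : ↥F, ∃ γ : κ.ord.ToType, γ < tstar ∧ x (γ, ζ.1) ∈ f y :=
      fun ζ => hkill ζ.1 ζ.2
    choose g hg1 hg2 using hkill'
    let Φ : ↥F → (Σ γ : {γ : κ.ord.ToType // γ < tstar},
        ↥(f y ∩ Eind (HMFree.idx κ γ.1))) :=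
      fun ζ => ⟨⟨g ζ, hg1 ζ⟩, ⟨x (g ζ, ζ.1),
        ⟨hg2 ζ, hYsub _ ((hCand_mem _ (halive' ζ.1 ζ.2 _ (hg1 ζ))).1)⟩⟩⟩
    have hΦinj : Function.Injective Φ := by
      intro ζ ζ' hEq
      have h1 : g ζ = g ζ' := congrArg (fun z => z.1.1) hEq
      have h2 : x (g ζ, ζ.1) = x (g ζ', ζ'.1) := congrArg (fun z => (z.2 : α)) hEq
      by_contra hne
      have hne1 : (ζ : (Order.succ κ).ord.ToType) ≠ (ζ' : (Order.succ κ).ord.ToType) :=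
        fun hc => hne (Subtype.ext hc)
      rcases lt_trichotomy (ζ : (Order.succ κ).ord.ToType) (ζ' : (Order.succ κ).ord.ToType)
        with hc | hc | hc
      · have hm := hCand_mem _ (halive' ζ'.1 ζ'.2 _ (hg1 ζ'))
        have hd := (hm.2 (g ζ', ζ.1) (Prod.Lex.right _ hc)).2 rfl
        rw [h1] at h2
        exact hd h2.symm
      · exact hne1 hc
      · have hm := hCand_mem _ (halive' ζ.1 ζ.2 _ (hg1 ζ))
        have hd := (hm.2 (g ζ, ζ'.1) (Prod.Lex.right _ hc)).2 rfl
        rw [← h1] at h2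
        exact hd h2
    have hcard : κ ≤ #(Σ γ : {γ : κ.ord.ToType // γ < tstar},
        ↥(f y ∩ Eind (HMFree.idx κ γ.1))) := by
      exact hFcard.symm.trans_le (mk_le_of_injective hΦinj)
    have hcard2 : #(Σ γ : {γ : κ.ord.ToType // γ < tstar},
        ↥(f y ∩ Eind (HMFree.idx κ γ.1))) < κ := by
      rw [mk_sigma]
      refine HMFree2.sum_lt_reg hκ ?_ _ ?_
      · rw [← HMFree.idx_card_eq κ tstar]
        exact HMFree.idx_card_lt κ tstar
      · intro γ
        exact hsmall y hyInE _ (HMFree.idx_lt κ γ.1)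
    exact absurd hcard (not_le.mpr hcard2)
end

section
/- Let λ be an infinite cardinal and θ an ordinal. Let (T_η : η < λ⁺) be a family of subsets of λ⁺, each of cardinality λ, such that every A ⊆ λ⁺ of cardinality λ⁺ contains some T_η. Suppose (f_i : 1 ≤ i < θ) are functions f_i : λ⁺ → 𝒫(λ⁺) with f_i(α) ⊆ α for all α, and such that for every ξ < λ⁺ and every η < ξ with T_η ⊆ ξ, there exists i with 1 ≤ i < θ such that f_i(ξ) ∩ T_η ≠ ∅. Then for every A ⊆ λ⁺ of cardinality λ⁺ there exist ordinals α < ξ, both in A, and some i with 1 ≤ i < θ, such that α ∈ f_i(ξ). Consequently, the coloring c : [λ⁺]² → θ given by c({α,ξ}) = the least i ≥ 1 with α ∈ f_i(ξ) if such i exists, and 0 otherwise (for α < ξ), is not constantly 0 on [A]² for any A ⊆ λ⁺ of cardinality λ⁺. -/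
open Cardinal Ordinal Set

lemma aux_lt_add_one (x : Ordinal.{0}) : x < x + 1 := by
  rw [Ordinal.add_one_eq_succ]; exact Order.lt_succ x

lemma aux_bounded (l : Cardinal.{0}) (hinf : ℵ₀ ≤ l) (S : Set Ordinal.{0})
    (hS : S ⊆ Set.Iio (Order.succ l).ord) (hcard : #S = Cardinal.lift.{1} l) :
    ∃ β < (Order.succ l).ord, ∀ x ∈ S, x < β := by
  obtain ⟨w, hw⟩ : ∃ w : Type 0, #w = l := ⟨Quotient.out l, mk_out l⟩
  have he : Nonempty (S ≃ w) := by
    rw [← Cardinal.lift_mk_eq']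
    simp [hcard, hw]
  obtain ⟨e⟩ := he
  set g : w → Ordinal.{0} := fun x => ((e.symm x : S) : Ordinal) + 1 with hg
  have hlim : Order.IsSuccLimit ((Order.succ l).ord) := Cardinal.isSuccLimit_ord (hinf.trans (le_of_lt (Order.lt_succ l)))
  have hsup : (⨆ x, g x) < (Order.succ l).ord := by
    apply Cardinal.iSup_lt_ord_of_isRegular (Cardinal.isRegular_succ hinf)
    · rw [hw]; exact Order.lt_succ l
    · intro i
      exact hlim.succ_lt (hS (e.symm i).2)
  refine ⟨⨆ x, g x, hsup, fun x hx => ?_⟩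
  have hgx : g (e ⟨x, hx⟩) = x + 1 := by simp [hg]
  calc x < x + 1 := aux_lt_add_one x
    _ = g (e ⟨x, hx⟩) := hgx.symm
    _ ≤ ⨆ x, g x := le_ciSup (Ordinal.bddAbove_range g) _

lemma aux_unbdd (l : Cardinal.{0}) (hinf : ℵ₀ ≤ l) (A : Set Ordinal.{0})
    (hA : A ⊆ Set.Iio (Order.succ l).ord) (hcard : #A = Cardinal.lift.{1} (Order.succ l))
    (β : Ordinal.{0}) (hβ : β < (Order.succ l).ord) : ∃ ξ ∈ A, β < ξ := by
  by_contra h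
  push_neg at h
  have hlim : Order.IsSuccLimit ((Order.succ l).ord) := Cardinal.isSuccLimit_ord (hinf.trans (le_of_lt (Order.lt_succ l)))
  have hsub : A ⊆ Set.Iio (β + 1) := fun x hx => lt_of_le_of_lt (h x hx) (aux_lt_add_one β)
  have hle : #A ≤ #(Set.Iio (β + 1)) := mk_le_mk_of_subset hsub
  rw [hcard, Ordinal.mk_Iio_ordinal] at hle
  have hcard' : (β + 1).card < Order.succ l := Cardinal.lt_ord.mp (hlim.succ_lt hβ)
  exact absurd (Cardinal.lift_le.mp hle) hcard'.not_ge

/-- The final step of Theorem 4.3: given a stick family `(T_η : η < λ⁺)` and set mappings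
`(f_i : 1 ≤ i < θ)` with `f_i(α) ⊆ α` such that for all `ξ < λ⁺` and `η < ξ` with
`T_η ⊆ ξ` some `f_i(ξ)` meets `T_η`, every `A ⊆ λ⁺` of cardinality `λ⁺` contains
`α < ξ` with `α ∈ f_i(ξ)` for some `1 ≤ i < θ`; consequently the coloring assigning to
`{α, ξ}` the least such `i` (and `0` if none exists) is not constantly `0` on any
`A ⊆ λ⁺` of cardinality `λ⁺`. -/
theorem stmt12 (l : Cardinal.{0}) (hinf : ℵ₀ ≤ l) (θ : Ordinal.{0})
    (T : Ordinal.{0} → Set Ordinal.{0})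
    (hT : ∀ η < (Order.succ l).ord,
      T η ⊆ Set.Iio (Order.succ l).ord ∧ #(T η) = Cardinal.lift.{1} l)
    (hguess : ∀ A : Set Ordinal.{0}, A ⊆ Set.Iio (Order.succ l).ord →
      #A = Cardinal.lift.{1} (Order.succ l) → ∃ η < (Order.succ l).ord, T η ⊆ A)
    (f : Ordinal.{0} → Ordinal.{0} → Set Ordinal.{0})
    (hf : ∀ i : Ordinal, 1 ≤ i → i < θ → ∀ α < (Order.succ l).ord, f i α ⊆ Set.Iio α)
    (hhit : ∀ ξ < (Order.succ l).ord, ∀ η < ξ, T η ⊆ Set.Iio ξ →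
      ∃ i : Ordinal, 1 ≤ i ∧ i < θ ∧ (f i ξ ∩ T η).Nonempty) :
    (∀ A : Set Ordinal.{0}, A ⊆ Set.Iio (Order.succ l).ord →
      #A = Cardinal.lift.{1} (Order.succ l) →
      ∃ α ∈ A, ∃ ξ ∈ A, α < ξ ∧ ∃ i : Ordinal, 1 ≤ i ∧ i < θ ∧ α ∈ f i ξ) ∧
    (∀ c : Ordinal.{0} → Ordinal.{0} → Ordinal.{0},
      (∀ α ξ : Ordinal, α < ξ → ξ < (Order.succ l).ord →
        ((∃ i : Ordinal, 1 ≤ i ∧ i < θ ∧ α ∈ f i ξ) →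
          c α ξ = sInf {i : Ordinal | 1 ≤ i ∧ i < θ ∧ α ∈ f i ξ}) ∧
        (¬ (∃ i : Ordinal, 1 ≤ i ∧ i < θ ∧ α ∈ f i ξ) → c α ξ = 0)) →
      ∀ A : Set Ordinal.{0}, A ⊆ Set.Iio (Order.succ l).ord →
        #A = Cardinal.lift.{1} (Order.succ l) →
        ¬ ∀ α ∈ A, ∀ ξ ∈ A, α < ξ → c α ξ = 0) := by
  have main : ∀ A : Set Ordinal.{0}, A ⊆ Set.Iio (Order.succ l).ord →
      #A = Cardinal.lift.{1} (Order.succ l) →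
      ∃ α ∈ A, ∃ ξ ∈ A, α < ξ ∧ ∃ i : Ordinal, 1 ≤ i ∧ i < θ ∧ α ∈ f i ξ := by
    intro A hA hAcard
    obtain ⟨η, hη, hTA⟩ := hguess A hA hAcard
    obtain ⟨β, hβ, hβbd⟩ := aux_bounded l hinf (T η) (hT η hη).1 (hT η hη).2
    obtain ⟨ξ, hξA, hξβ⟩ := aux_unbdd l hinf A hA hAcard (max β η) (max_lt hβ hη)
    have hξ : ξ < (Order.succ l).ord := hA hξA
    have hηξ : η < ξ := (le_max_right β η).trans_lt hξβ
    have hTξ : T η ⊆ Set.Iio ξ := fun x hx => (hβbd x hx).trans_le ((le_max_left β η).trans hξβ.le)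
    obtain ⟨i, hi1, hiθ, α, hαf, hαT⟩ := hhit ξ hξ η hηξ hTξ
    exact ⟨α, hTA hαT, ξ, hξA, hf i hi1 hiθ ξ hξ hαf, i, hi1, hiθ, hαf⟩
  refine ⟨main, fun c hc A hA hAcard h0 => ?_⟩
  obtain ⟨α, hαA, ξ, hξA, hαξ, i, hi1, hiθ, hαf⟩ := main A hA hAcard
  have hex : ∃ i : Ordinal, 1 ≤ i ∧ i < θ ∧ α ∈ f i ξ := ⟨i, hi1, hiθ, hαf⟩
  have hceq := (hc α ξ hαξ (hA hξA)).1 hex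
  have hmem : sInf {i : Ordinal | 1 ≤ i ∧ i < θ ∧ α ∈ f i ξ} ∈
      {i : Ordinal | 1 ≤ i ∧ i < θ ∧ α ∈ f i ξ} := csInf_mem ⟨i, hi1, hiθ, hαf⟩
  have : (1 : Ordinal) ≤ c α ξ := hceq ▸ hmem.1
  rw [h0 α hαA ξ hξA hαξ] at this
  exact absurd this (by simp)
end
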